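/- arXiv:2305.19661 — 5 statements merged into one kernel-verified Lean document; each statement's English description precedes it below -/
import Mathlib

section
/- Let Γ be a connected cubic graph admitting a partition of its edge set into a 2-factor C and a 1-factor I such that |C| ≥ 3 and the quotient graph Γ_C with respect to C is a cycle. Suppose there exists a vertex-transitive subgroup G ≤ Aut(Γ) preserving this partition. Then the permutation group induced by the action of G on the vertex set C of Γ_C is the dihedral group of order 2m, where m = |C|. -/
namespace CubicFIG

open SimpleGraph

variable {V : Type*}

/-- `f` is an automorphism of the graph `Γ`. -/
def IsAut (Γ : SimpleGraph V) (f : Equiv.Perm V) : Prop :=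
  ∀ u v : V, Γ.Adj (f u) (f v) ↔ Γ.Adj u v

/-- `f` preserves (the edge set of) the subgraph `H` (e.g. a 2-factor). -/
def Preserves (H : SimpleGraph V) (f : Equiv.Perm V) : Prop :=
  ∀ u v : V, H.Adj u v → H.Adj (f u) (f v)

/-- `Γ` is vertex-transitive. -/
def IsVertexTransitive (Γ : SimpleGraph V) : Prop :=
  ∀ u v : V, ∃ f : Equiv.Perm V, IsAut Γ f ∧ f u = v

/-- `Γ` is cubic. -/
def IsCubic (Γ : SimpleGraph V) : Prop := ∀ v : V, (Γ.neighborSet v).ncard = 3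

/-- The edge set of `Γ` is partitioned into the 2-factor `H` (a spanning 2-regular subgraph,
whose cycles are the connected components of `H`) and a 1-factor (the remaining edges,
which form a perfect matching). -/
def FactorPartition (Γ H : SimpleGraph V) : Prop :=
  H ≤ Γ ∧ (∀ v : V, (H.neighborSet v).ncard = 2) ∧
    (∀ v : V, {w : V | Γ.Adj v w ∧ ¬ H.Adj v w}.ncard = 1)

/-- The quotient graph `Γ_C` of `Γ` with respect to the 2-factor `H`: its vertices are the
cycles of the 2-factor, i.e. the connected components of `H`, two of them being adjacent iff
some vertex of one is `Γ`-adjacent to some vertex of the other. -/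
def quotientGraph (Γ H : SimpleGraph V) : SimpleGraph H.ConnectedComponent :=
  SimpleGraph.fromRel fun c d =>
    ∃ u v : V, Γ.Adj u v ∧ H.connectedComponentMk u = c ∧ H.connectedComponentMk v = d

/-- A graph is a cycle iff it is finite, connected and 2-regular. -/
def IsCycleGraph {W : Type*} (G : SimpleGraph W) : Prop :=
  Finite W ∧ G.Connected ∧ ∀ w : W, (G.neighborSet w).ncard = 2

/-- `Γ` is of alternating cycle quotient type with respect to the 2-factor `H`:
the edge set of `Γ` is partitioned into the 2-factor `H` and a 1-factor, the quotient
graph is a cycle, and any two vertices adjacent along a common cycle of the 2-factor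
have their outside neighbors in distinct cycles of the 2-factor. -/
def AltCQT (Γ H : SimpleGraph V) : Prop :=
  IsCubic Γ ∧ FactorPartition Γ H ∧ IsCycleGraph (quotientGraph Γ H) ∧
  ∀ ⦃u v u' v' : V⦄, H.Adj u v → Γ.Adj u u' → ¬ H.Adj u u' → Γ.Adj v v' → ¬ H.Adj v v' →
    H.connectedComponentMk u' ≠ H.connectedComponentMk v'

/-- The relation giving the cycle ("non-link") edges of `X_a(m,n,S,ℓ)`:
`v_{i,j} ∼ v_{i,j+a_i}, v_{i,j+b_i}` for `j ≡ i (mod 2)`. -/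
def XaCycleRel (m n : ℕ) (a b : ZMod m → ZMod n) (u v : ZMod m × ZMod n) : Prop :=
  u.2.val % 2 = u.1.val % 2 ∧ u.1 = v.1 ∧ (v.2 = u.2 + a u.1 ∨ v.2 = u.2 + b u.1)

/-- The relation giving the "link" edges of `X_a(m,n,S,ℓ)`:
`v_{i,j} ∼ v_{i+1,j}` for `0 ≤ i ≤ m-2`, `j ≡ i (mod 2)`, and
`v_{m-1,j} ∼ v_{0,j+ℓ}` for `j ≡ m-1 (mod 2)`. -/
def XaLinkRel (m n : ℕ) (ℓ : ZMod n) (u v : ZMod m × ZMod n) : Prop :=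
  (u.2.val % 2 = u.1.val % 2 ∧ u.1.val ≤ m - 2 ∧ v.1 = u.1 + 1 ∧ v.2 = u.2) ∨
  (u.2.val % 2 = (m - 1) % 2 ∧ u.1 = ((m - 1 : ℕ) : ZMod m) ∧ v.1 = 0 ∧ v.2 = u.2 + ℓ)

/-- The graph `X_a(m,n,S,ℓ)` with signature `S = [{a 0, b 0},…,{a (m-1), b (m-1)}]`. -/
def XaGraph (m n : ℕ) (a b : ZMod m → ZMod n) (ℓ : ZMod n) : SimpleGraph (ZMod m × ZMod n) :=
  SimpleGraph.fromRel fun u v => XaCycleRel m n a b u v ∨ XaLinkRel m n ℓ u v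

/-- The 2-factor of `X_a(m,n,S,ℓ)` consisting of the `m` cycles `C_i` induced on the sets
`V_i` (its edges are the non-links). -/
def XaFactor (m n : ℕ) (a b : ZMod m → ZMod n) : SimpleGraph (ZMod m × ZMod n) :=
  SimpleGraph.fromRel (XaCycleRel m n a b)

/-- Admissibility of the parameters of `X_a(m,n,S,ℓ)`: `m ≥ 3`, `n ≥ 4` even, `ℓ` of the
same parity as `m`, `a 0 = 1`, `b 0 = -1`, and all the `a i, b i` distinct and odd with
`gcd(b i - a i, n) = 2`. -/
def Admissible (m n : ℕ) (a b : ZMod m → ZMod n) (ℓ : ZMod n) : Prop :=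
  3 ≤ m ∧ 4 ≤ n ∧ n % 2 = 0 ∧ ℓ.val % 2 = m % 2 ∧ a 0 = 1 ∧ b 0 = -1 ∧
    ∀ i : ZMod m, a i ≠ b i ∧ (a i).val % 2 = 1 ∧ (b i).val % 2 = 1 ∧
      Nat.gcd (b i - a i).val n = 2

/-- The honeycomb toroidal graph `HTG(m,n,ℓ)`: the graph `X_a(m,n,S,ℓ)` whose signature
consists of `m` copies of `{-1,1}`. -/
def HTG (m n : ℕ) (ℓ : ZMod n) : SimpleGraph (ZMod m × ZMod n) :=
  XaGraph m n (fun _ => 1) (fun _ => -1) ℓ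

/-- The signature `[1,k,1,k,…,1,k]`. -/
def kSig (m n : ℕ) (k : ZMod n) : ZMod m → ZMod n :=
  fun i => if i.val % 2 = 0 then 1 else k

/-- The graph `X_a(m,n,k,ℓ)`, i.e. `X_a(m,n,S,ℓ)` with signature `S = [1,k,1,k,…,1,k]`. -/
def XaK (m n : ℕ) (k ℓ : ZMod n) : SimpleGraph (ZMod m × ZMod n) :=
  XaGraph m n (kSig m n k) (fun i => -(kSig m n k i)) ℓ

/-- The 2-factor of `X_a(m,n,k,ℓ)` consisting of the `m` cycles `C_i`. -/
def XaKFactor (m n : ℕ) (k : ZMod n) : SimpleGraph (ZMod m × ZMod n) :=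
  XaFactor m n (kSig m n k) (fun i => -(kSig m n k i))

/-- Assumption A: `Γ = X_a(m,n,S,ℓ)` with `m ≥ 3`, `n ≥ 6` even, `ℓ` of the same parity as
`m`, signature `S = [k 0, …, k (m-1)]` (that is, `{a i, b i} = {k i, -(k i)}`) with `k 0 = 1`
and each `k i` coprime to `n`, admitting a vertex-transitive subgroup of `Aut(Γ)` preserving
the 2-factor consisting of the cycles `C_i`. -/
def AssumptionA (m n : ℕ) (k : ZMod m → ZMod n) (ℓ : ZMod n) : Prop :=
  3 ≤ m ∧ 6 ≤ n ∧ n % 2 = 0 ∧ ℓ.val % 2 = m % 2 ∧ k 0 = 1 ∧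
  (∀ i : ZMod m, Nat.Coprime (k i).val n) ∧
  ∃ G : Subgroup (Equiv.Perm (ZMod m × ZMod n)),
    (∀ g ∈ G, IsAut (XaGraph m n k (fun i => -(k i)) ℓ) g) ∧
    (∀ g ∈ G, Preserves (XaFactor m n k (fun i => -(k i))) g) ∧
    ∀ u v : ZMod m × ZMod n, ∃ g ∈ G, g u = v

/-- Condition (II): `m ≥ 4` and `n ≥ 6` even, `ℓ ∈ ℤ_n` even, `k ∈ ℤ_n` odd with
`gcd(k,n) = 1`, `2k ≠ ±2`, `2k² = ±2`, and (writing `n = 2n'`) either `ℓk = ±ℓ` and at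
least one of `k² = ±1` and `4 ∣ m` holds, or `ℓk = n' ± ℓ`, `m ≡ 2 (mod 4)` and
`k² = n' ± 1`. -/
def CondII (m n : ℕ) (k ℓ : ZMod n) : Prop :=
  4 ≤ m ∧ m % 2 = 0 ∧ 6 ≤ n ∧ n % 2 = 0 ∧ ℓ.val % 2 = 0 ∧ k.val % 2 = 1 ∧
  Nat.Coprime k.val n ∧ 2 * k ≠ 2 ∧ 2 * k ≠ -2 ∧ (2 * k ^ 2 = 2 ∨ 2 * k ^ 2 = -2) ∧
  (((ℓ * k = ℓ ∨ ℓ * k = -ℓ) ∧ ((k ^ 2 = 1 ∨ k ^ 2 = -1) ∨ m % 4 = 0)) ∨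
   ((ℓ * k = (↑(n / 2) : ZMod n) + ℓ ∨ ℓ * k = (↑(n / 2) : ZMod n) - ℓ) ∧ m % 4 = 2 ∧
     (k ^ 2 = (↑(n / 2) : ZMod n) + 1 ∨ k ^ 2 = (↑(n / 2) : ZMod n) - 1)))

/-- `Γ` (with distinguished 2-factor `H`, whose edges are the non-links) has a 10-cycle
whose code (the cyclic 0/1 sequence recording links (0) and non-links (1), up to rotation
and reflection) is given by `c`. -/
def HasTenCycleWithCode (Γ H : SimpleGraph V) (c : ZMod 10 → Prop) : Prop :=
  ∃ v : ZMod 10 → V, Function.Injective v ∧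
    ∀ j : ZMod 10, Γ.Adj (v j) (v (j + 1)) ∧ (H.Adj (v j) (v (j + 1)) ↔ c j)

/-- The code `1⁶01²0` of 10-cycles of type 2. -/
def type2Code : ZMod 10 → Prop := fun j => j.val ≠ 6 ∧ j.val ≠ 9

/-- The code `1³0101010` of 10-cycles of type 3. -/
def type3Code : ZMod 10 → Prop :=
  fun j => j.val = 0 ∨ j.val = 1 ∨ j.val = 2 ∨ j.val = 4 ∨ j.val = 6 ∨ j.val = 8

/-- `Γ` is 2-arc-regular: the automorphism group acts regularly on 2-arcs. -/
def TwoArcRegular (Γ : SimpleGraph V) : Prop :=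
  ∀ ⦃v0 v1 v2 w0 w1 w2 : V⦄, Γ.Adj v0 v1 → Γ.Adj v1 v2 → v0 ≠ v2 →
    Γ.Adj w0 w1 → Γ.Adj w1 w2 → w0 ≠ w2 →
    ∃! f : Equiv.Perm V, IsAut Γ f ∧ f v0 = w0 ∧ f v1 = w1 ∧ f v2 = w2

/-!
The cycles of the 2-factor are permuted by `G`, and the induced group `Q` acts by automorphisms
on the quotient cycle `Γ_C ≅ ℤ/m`, so every element of `Q` is `x ↦ c ± x` and `Q` embeds in the
dihedral group of order `2m`. Vertex-transitivity of `G` makes `Q` transitive. Moreover `Q`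
contains a reflection: pick `u, u'` on the cycle `C₀` whose 1-factor neighbours lie on the two
different neighbouring cycles `C₁` and `C₋₁`; an element of `G` mapping `u` to `u'` maps the
1-factor edge at `u` to the one at `u'`, so it fixes `C₀` and maps `C₁` to `C₋₁`. A transitive
subgroup of the dihedral group containing a reflection is the whole group.
-/

lemma two_ne_zero_of_three_le {m : ℕ} (hm : 3 ≤ m) : (2 : ZMod m) ≠ 0 := by
  intro h
  have := congrArg ZMod.val h
  rw [ZMod.val_two_eq_two_mod, Nat.mod_eq_of_lt (by omega), ZMod.val_zero] at this
  omega

section Dihedral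

open DihedralGroup

def dihedralToPerm (m : ℕ) : DihedralGroup m →* Equiv.Perm (ZMod m) where
  toFun
    | r i => Equiv.subRight i
    | sr i => Function.Involutive.toPerm (fun x => i - x) (sub_sub_cancel i)
  map_one' := by
    rw [one_def]
    ext x
    simp [Equiv.subRight]
  map_mul' := by
    rintro (i | i) (j | j) <;> ext x <;>
      simp [r_mul_r, r_mul_sr, sr_mul_r, sr_mul_sr, Equiv.subRight,
        Function.Involutive.toPerm] <;> ring

variable {m : ℕ}

@[simp] lemma dihedralToPerm_r (i x : ZMod m) : dihedralToPerm m (r i) x = x - i := rfl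

@[simp] lemma dihedralToPerm_sr (i x : ZMod m) : dihedralToPerm m (sr i) x = i - x := rfl

lemma dihedralToPerm_injective (hm : 3 ≤ m) : Function.Injective (dihedralToPerm m) := by
  rw [injective_iff_map_eq_one]
  rintro (i | i) h
  · have h0 := congrArg (fun π => π 0) h
    simp only [dihedralToPerm_r, zero_sub, Equiv.Perm.coe_one, id_eq, neg_eq_zero] at h0
    rw [h0, one_def]
  · have h0 := congrArg (fun π => π 0) h
    have h1 := congrArg (fun π => π 1) h
    simp only [dihedralToPerm_sr, sub_zero, Equiv.Perm.coe_one, id_eq] at h0 h1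
    exact absurd (by linear_combination h0 - h1) (two_ne_zero_of_three_le hm)

/-- The step `π (x + 1) - π x = ±1` cannot change sign, as that would give `π (x + 2) = π x`. -/
lemma exists_eq_zero_add_mul_of_step (hm : 3 ≤ m) {π : Equiv.Perm (ZMod m)}
    (hπ : ∀ x, π (x + 1) = π x + 1 ∨ π (x + 1) = π x - 1) :
    ∃ s : ZMod m, (s = 1 ∨ s = -1) ∧ ∀ x, π x = π 0 + s * x := by
  have : NeZero m := ⟨by omega⟩
  have h2 := two_ne_zero_of_three_le hm
  set s := π 1 - π 0
  have hs : s = 1 ∨ s = -1 := by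
    rcases hπ 0 with h | h <;> rw [zero_add] at h <;> [left; right] <;> linear_combination h
  have hstep : ∀ n : ℕ, π (n + 1) = π n + s := by
    intro n
    induction n with
    | zero => simp [s]
    | succ n ih =>
      push_cast
      have hback : π (n + 1 + 1) ≠ π n := fun h => h2 <| by
        linear_combination π.injective h
      rcases hπ (n + 1) with h | h <;> rcases hs with hs | hs
      · rw [h, hs]
      · exact absurd (by rw [h, ih, hs]; ring) hback
      · exact absurd (by rw [h, ih, hs]; ring) hback
      · rw [h, hs, sub_eq_add_neg]
  have hlin : ∀ n : ℕ, π n = π 0 + s * n := by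
    intro n
    induction n with
    | zero => simp
    | succ n ih => push_cast; rw [hstep, ih]; ring
  exact ⟨s, hs, fun x => by simpa using hlin x.val⟩

lemma mem_range_dihedralToPerm_of_step (hm : 3 ≤ m) {π : Equiv.Perm (ZMod m)}
    (hπ : ∀ x, π (x + 1) = π x + 1 ∨ π (x + 1) = π x - 1) :
    π ∈ (dihedralToPerm m).range := by
  obtain ⟨s, rfl | rfl, hlin⟩ := exists_eq_zero_add_mul_of_step hm hπ
  · exact ⟨r (-π 0), Equiv.ext fun x => by rw [dihedralToPerm_r, hlin x]; ring⟩
  · exact ⟨sr (π 0), Equiv.ext fun x => by rw [dihedralToPerm_sr, hlin x]; ring⟩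

theorem eq_range_dihedralToPerm (hm : 3 ≤ m) {P : Subgroup (Equiv.Perm (ZMod m))}
    (hstep : ∀ π ∈ P, ∀ x, π (x + 1) = π x + 1 ∨ π (x + 1) = π x - 1)
    (htrans : ∀ a, ∃ π ∈ P, π 0 = a)
    (hrefl : ∃ π ∈ P, π 0 = 0 ∧ π 1 = -1) :
    P = (dihedralToPerm m).range := by
  have h2 := two_ne_zero_of_three_le hm
  refine le_antisymm (fun π hπ => mem_range_dihedralToPerm_of_step hm (hstep π hπ)) ?_
  rw [MonoidHom.range_eq_map, Subgroup.map_le_iff_le_comap]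
  have hsr : sr 0 ∈ P.comap (dihedralToPerm m) := by
    obtain ⟨π, hπP, hπ0, hπ1⟩ := hrefl
    obtain ⟨i | i, rfl⟩ := mem_range_dihedralToPerm_of_step hm (hstep π hπP)
    · simp only [dihedralToPerm_r, zero_sub, neg_eq_zero] at hπ0 hπ1
      exact absurd (by linear_combination hπ1 + hπ0) h2
    · simp only [dihedralToPerm_sr, sub_zero] at hπ0
      rwa [← hπ0]
  have hr : ∀ i, r i ∈ P.comap (dihedralToPerm m) := by
    intro i
    obtain ⟨π, hπP, hπ0⟩ := htrans (-i)
    obtain ⟨j | j, rfl⟩ := mem_range_dihedralToPerm_of_step hm (hstep π hπP)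
    · simp only [dihedralToPerm_r, zero_sub, neg_inj] at hπ0
      rwa [← hπ0]
    · simp only [dihedralToPerm_sr, sub_zero] at hπ0
      have : r i = sr j * sr 0 := by rw [sr_mul_sr, hπ0, zero_sub, neg_neg]
      exact this ▸ Subgroup.mul_mem _ hπP hsr
  rintro (i | i) -
  · exact hr i
  · have : sr i = r (-i) * sr 0 := by rw [r_mul_sr, zero_sub, neg_neg]
    exact this ▸ Subgroup.mul_mem _ (hr (-i)) hsr

end Dihedral

section CycleGraph

variable {W : Type*} {Γ : SimpleGraph W}

lemma neighborSet_eq_pair_of_ncard_eq_two {w a b : W} (hw : (Γ.neighborSet w).ncard = 2)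
    (ha : Γ.Adj w a) (hb : Γ.Adj w b) (hab : a ≠ b) : Γ.neighborSet w = {a, b} :=
  (Set.eq_of_subset_of_ncard_le (by rintro x (rfl | rfl) <;> assumption)
    (by rw [hw, Set.ncard_pair hab]) (Set.finite_of_ncard_ne_zero (by omega))).symm

lemma Preconnected.mem_of_adj_closed (hΓ : Γ.Preconnected) {s : Set W}
    (hs : ∀ a b, a ∈ s → Γ.Adj a b → b ∈ s) {a : W} (ha : a ∈ s) (b : W) : b ∈ s := by
  obtain ⟨p⟩ := hΓ a b
  induction p with
  | nil => exact ha
  | cons hadj _ ih => exact ih (hs _ _ ha hadj)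

/-- A finite connected 2-regular graph cannot be a tree, since a nontrivial tree has a leaf. -/
lemma IsCycleGraph.exists_isCycle (hΓ : IsCycleGraph Γ) :
    ∃ (u : W) (c : Γ.Walk u u), c.IsCycle := by
  classical
  obtain ⟨hfin, hconn, hdeg⟩ := hΓ
  have := Fintype.ofFinite W
  obtain ⟨w⟩ := hconn.nonempty
  obtain ⟨a, b, -, hw⟩ := Set.ncard_eq_two.mp (hdeg w)
  have : Nontrivial W := nontrivial_of_ne w a (Γ.ne_of_adj (by simp [← mem_neighborSet, hw]))
  by_contra! hacyc
  obtain ⟨v, hv⟩ := (IsTree.mk hconn hacyc).exists_vert_degree_one_of_nontrivial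
  have := hdeg v
  rw [Set.ncard_eq_toFinset_card', Set.toFinset_card, card_neighborSet_eq_degree, hv] at this
  omega

/-- In a 2-regular graph the vertex set of a cycle is closed under adjacency, so in a connected one
every cycle is Hamiltonian. -/
lemma exists_zmod_equiv_of_isCycle (hdeg : ∀ w, (Γ.neighborSet w).ncard = 2)
    (hconn : Γ.Preconnected) {u : W} {c : Γ.Walk u u} (hc : c.IsCycle) :
    ∃ e : ZMod c.length ≃ W, ∀ x y, Γ.Adj (e x) (e y) ↔ y = x + 1 ∨ x = y + 1 := by
  set n := c.length
  have hn : 3 ≤ n := hc.three_le_length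
  have : NeZero n := ⟨by omega⟩
  have : Fact (1 < n) := ⟨by omega⟩
  let f : ZMod n → W := fun x => c.getVert x.val
  have hinj : f.Injective := fun x y hxy => ZMod.val_injective n <|
    hc.getVert_injOn' (by have := x.val_lt; simp only [Set.mem_ofPred_eq]; omega)
      (by have := y.val_lt; simp only [Set.mem_ofPred_eq]; omega) hxy
  have hsucc : ∀ x, Γ.Adj (f x) (f (x + 1)) := by
    intro x
    have hval : c.getVert (x + 1).val = c.getVert (x.val + 1) := by
      rw [ZMod.val_add, ZMod.val_one]
      rcases Nat.lt_or_ge (x.val + 1) n with h | h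
      · rw [Nat.mod_eq_of_lt h]
      · have : x.val + 1 = n := by have := x.val_lt; omega
        rw [this, Nat.mod_self, c.getVert_zero, c.getVert_length]
    simpa only [f, hval] using c.adj_getVert_succ x.val_lt
  have hnbr : ∀ x w, Γ.Adj (f x) w ↔ w = f (x + 1) ∨ w = f (x - 1) := by
    intro x w
    have hne : f (x + 1) ≠ f (x - 1) := fun h =>
      two_ne_zero_of_three_le hn (by linear_combination hinj h)
    rw [← mem_neighborSet, neighborSet_eq_pair_of_ncard_eq_two (hdeg _) (hsucc x)
      (by simpa using (hsucc (x - 1)).symm) hne]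
    rfl
  have hsurj : f.Surjective := fun w =>
    Preconnected.mem_of_adj_closed hconn (s := Set.range f)
      (by
        rintro _ b ⟨x, rfl⟩ hb
        rcases (hnbr x b).mp hb with rfl | rfl <;> exact ⟨_, rfl⟩)
      ⟨0, rfl⟩ w
  refine ⟨Equiv.ofBijective f ⟨hinj, hsurj⟩, fun x y => ?_⟩
  show Γ.Adj (f x) (f y) ↔ _
  simp only [hnbr, hinj.eq_iff, eq_sub_iff_add_eq]
  tauto

theorem IsCycleGraph.exists_zmod_equiv (hΓ : IsCycleGraph Γ) :
    3 ≤ Nat.card W ∧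
      ∃ e : ZMod (Nat.card W) ≃ W, ∀ x y, Γ.Adj (e x) (e y) ↔ y = x + 1 ∨ x = y + 1 := by
  obtain ⟨u, c, hc⟩ := hΓ.exists_isCycle
  obtain ⟨e, he⟩ := exists_zmod_equiv_of_isCycle hΓ.2.2 hΓ.2.1.preconnected hc
  have hcard : Nat.card W = c.length := by
    have : NeZero c.length := ⟨by have := hc.three_le_length; omega⟩
    rw [← Nat.card_congr e, Nat.card_zmod]
  rw [hcard]
  exact ⟨hc.three_le_length, e, he⟩

end CycleGraph

theorem IsCycleGraph.nonempty_mulEquiv_dihedralGroup {W : Type*} {Γ : SimpleGraph W}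
    (hΓ : IsCycleGraph Γ) (Q : Subgroup (Equiv.Perm W))
    (hadj : ∀ σ ∈ Q, ∀ c d, Γ.Adj c d → Γ.Adj (σ c) (σ d))
    (htrans : ∀ c d, ∃ σ ∈ Q, σ c = d)
    (hstab : ∀ c d d', Γ.Adj c d → Γ.Adj c d' → ∃ σ ∈ Q, σ c = c ∧ σ d = d') :
    Nonempty (Q ≃* DihedralGroup (Nat.card W)) := by
  obtain ⟨hm, e, he⟩ := hΓ.exists_zmod_equiv
  let P := Q.map (e.permCongrHom.symm : Equiv.Perm W →* Equiv.Perm (ZMod (Nat.card W)))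
  have hmem : ∀ π, π ∈ P ↔ e.permCongr π ∈ Q := fun π => Subgroup.mem_map_equiv
  have hP : P = (dihedralToPerm _).range := by
    refine eq_range_dihedralToPerm hm (fun π hπ x => ?_) (fun a => ?_) ?_
    · have := hadj _ ((hmem π).mp hπ) _ _ ((he x (x + 1)).mpr (Or.inl rfl))
      simp only [Equiv.permCongr_apply, Equiv.symm_apply_apply, he] at this
      rcases this with h | h
      · exact Or.inl h
      · exact Or.inr (eq_sub_of_add_eq h.symm)
    · obtain ⟨σ, hσ, hσ0⟩ := htrans (e 0) (e a)
      exact ⟨e.permCongr.symm σ, (hmem _).mpr (by rwa [Equiv.apply_symm_apply]), by simp [hσ0]⟩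
    · obtain ⟨σ, hσ, h0, h1⟩ := hstab (e 0) (e 1) (e (-1))
        ((he _ _).mpr (Or.inl (zero_add 1).symm)) ((he _ _).mpr (Or.inr (neg_add_cancel 1).symm))
      exact ⟨e.permCongr.symm σ, (hmem _).mpr (by rwa [Equiv.apply_symm_apply]),
        by simp [h0], by simp [h1]⟩
  exact ⟨(e.permCongrHom.symm.subgroupMap Q).trans ((MulEquiv.subgroupCongr hP).trans
    (MonoidHom.ofInjective (dihedralToPerm_injective hm)).symm)⟩

section ComponentAction

variable {Γ H : SimpleGraph V} {G : Subgroup (Equiv.Perm V)}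

def componentAction (H : SimpleGraph V) (G : Subgroup (Equiv.Perm V)) :
    Subgroup (Equiv.Perm H.ConnectedComponent) where
  carrier := {σ | ∃ g ∈ G, ∀ v : V, σ (H.connectedComponentMk v) = H.connectedComponentMk (g v)}
  one_mem' := ⟨1, G.one_mem, fun _ => rfl⟩
  mul_mem' := by
    rintro σ τ ⟨g, hg, hσ⟩ ⟨g', hg', hτ⟩
    exact ⟨g * g', G.mul_mem hg hg', fun v => by simp [hσ, hτ]⟩
  inv_mem' := by
    rintro σ ⟨g, hg, hσ⟩
    refine ⟨g⁻¹, G.inv_mem hg, fun v => σ.injective ?_⟩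
    simp [hσ]

lemma exists_mem_componentAction (hGpres : ∀ g ∈ G, Preserves H g) {g : Equiv.Perm V}
    (hg : g ∈ G) :
    ∃ σ ∈ componentAction H G,
      ∀ v, σ (H.connectedComponentMk v) = H.connectedComponentMk (g v) := by
  let φ : H ≃g H := ⟨g, fun {a b} =>
    ⟨fun h => by simpa using hGpres g⁻¹ (G.inv_mem hg) _ _ h, hGpres g hg a b⟩⟩
  exact ⟨φ.connectedComponentEquiv, ⟨g, hg, fun _ => rfl⟩, fun _ => rfl⟩

lemma quotientGraph_adj_iff {c d : H.ConnectedComponent} :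
    (quotientGraph Γ H).Adj c d ↔ c ≠ d ∧
      ∃ u v, Γ.Adj u v ∧ H.connectedComponentMk u = c ∧ H.connectedComponentMk v = d := by
  rw [quotientGraph, fromRel_adj]
  refine and_congr_right fun _ => ⟨?_, Or.inl⟩
  rintro (h | ⟨u, v, huv, rfl, rfl⟩)
  · exact h
  · exact ⟨v, u, huv.symm, rfl, rfl⟩

lemma componentAction_adj (hGaut : ∀ g ∈ G, IsAut Γ g) {σ : Equiv.Perm H.ConnectedComponent}
    (hσ : σ ∈ componentAction H G) {c d : H.ConnectedComponent}
    (hcd : (quotientGraph Γ H).Adj c d) : (quotientGraph Γ H).Adj (σ c) (σ d) := by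
  obtain ⟨g, hg, hσg⟩ := hσ
  obtain ⟨hne, u, v, huv, rfl, rfl⟩ := quotientGraph_adj_iff.mp hcd
  exact quotientGraph_adj_iff.mpr
    ⟨σ.injective.ne hne, g u, g v, (hGaut g hg u v).mpr huv, (hσg u).symm, (hσg v).symm⟩

lemma componentAction_exists_apply_eq (hGpres : ∀ g ∈ G, Preserves H g)
    (htrans : ∀ u v : V, ∃ g ∈ G, g u = v) (c d : H.ConnectedComponent) :
    ∃ σ ∈ componentAction H G, σ c = d := by
  obtain ⟨u, rfl⟩ := c.exists_rep
  obtain ⟨v, rfl⟩ := d.exists_rep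
  obtain ⟨g, hg, rfl⟩ := htrans u v
  obtain ⟨σ, hσ, hσg⟩ := exists_mem_componentAction hGpres hg
  exact ⟨σ, hσ, hσg u⟩

lemma FactorPartition.eq_of_adj_of_not_adj (hpart : FactorPartition Γ H) {u v w : V}
    (hv : Γ.Adj u v) (hv' : ¬H.Adj u v) (hw : Γ.Adj u w) (hw' : ¬H.Adj u w) : v = w := by
  obtain ⟨x, hx⟩ := Set.ncard_eq_one.mp (hpart.2.2 u)
  have hvx : v ∈ ({x} : Set V) := hx ▸ ⟨hv, hv'⟩
  have hwx : w ∈ ({x} : Set V) := hx ▸ ⟨hw, hw'⟩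
  exact hvx.trans hwx.symm

/-- If `uv` and `u'v'` are 1-factor edges from `c` to `d` and `d'`, an element of `G` with
`g u = u'` has `g v = v'`, since the 1-factor is a perfect matching. -/
lemma componentAction_exists_fix_apply_eq (hpart : FactorPartition Γ H)
    (hGaut : ∀ g ∈ G, IsAut Γ g) (hGpres : ∀ g ∈ G, Preserves H g)
    (htrans : ∀ u v : V, ∃ g ∈ G, g u = v) {c d d' : H.ConnectedComponent}
    (hd : (quotientGraph Γ H).Adj c d) (hd' : (quotientGraph Γ H).Adj c d') :
    ∃ σ ∈ componentAction H G, σ c = c ∧ σ d = d' := by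
  have hH : ∀ {a b}, H.connectedComponentMk a ≠ H.connectedComponentMk b → ¬H.Adj a b :=
    fun h hab => h (ConnectedComponent.eq.mpr hab.reachable)
  obtain ⟨hne, u, v, huv, rfl, rfl⟩ := quotientGraph_adj_iff.mp hd
  obtain ⟨hne', u', v', huv', hu', rfl⟩ := quotientGraph_adj_iff.mp hd'
  obtain ⟨g, hg, rfl⟩ := htrans u u'
  obtain ⟨σ, hσ, hσg⟩ := exists_mem_componentAction hGpres hg
  have hgv : g v = v' := hpart.eq_of_adj_of_not_adj ((hGaut g hg u v).mpr huv)
    (fun h => hH hne (by simpa using hGpres g⁻¹ (G.inv_mem hg) _ _ h)) huv' (hH (hu' ▸ hne'))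
  exact ⟨σ, hσ, by rw [hσg, hu'], by rw [hσg, hgv]⟩

end ComponentAction

theorem statement0_general {V : Type*} (Γ H : SimpleGraph V)
    (hpart : FactorPartition Γ H)
    (hquot : IsCycleGraph (quotientGraph Γ H))
    (G : Subgroup (Equiv.Perm V))
    (hGaut : ∀ g ∈ G, IsAut Γ g)
    (hGpres : ∀ g ∈ G, Preserves H g)
    (hGtrans : ∀ u v : V, ∃ g ∈ G, g u = v) :
    ∃ Q : Subgroup (Equiv.Perm H.ConnectedComponent),
      (Q : Set (Equiv.Perm H.ConnectedComponent)) =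
        {σ : Equiv.Perm H.ConnectedComponent |
          ∃ g ∈ G, ∀ v : V, σ (H.connectedComponentMk v) = H.connectedComponentMk (g v)} ∧
      Nonempty (Q ≃* DihedralGroup (Nat.card H.ConnectedComponent)) :=
  ⟨componentAction H G, rfl, hquot.nonempty_mulEquiv_dihedralGroup _
    (fun _ hσ _ _ => componentAction_adj hGaut hσ)
    (componentAction_exists_apply_eq hGpres hGtrans)
    (fun _ _ _ => componentAction_exists_fix_apply_eq hpart hGaut hGpres hGtrans)⟩

/-- Proposition: quotient group is dihedral. -/
theorem statement0 {V : Type*} [Fintype V] (Γ H : SimpleGraph V)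
    (hconn : Γ.Connected) (hcubic : IsCubic Γ) (hpart : FactorPartition Γ H)
    (hm3 : 3 ≤ Nat.card H.ConnectedComponent)
    (hquot : IsCycleGraph (quotientGraph Γ H))
    (G : Subgroup (Equiv.Perm V))
    (hGaut : ∀ g ∈ G, IsAut Γ g)
    (hGpres : ∀ g ∈ G, Preserves H g)
    (hGtrans : ∀ u v : V, ∃ g ∈ G, g u = v) :
    ∃ Q : Subgroup (Equiv.Perm H.ConnectedComponent),
      (Q : Set (Equiv.Perm H.ConnectedComponent)) =
        {σ : Equiv.Perm H.ConnectedComponent |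
          ∃ g ∈ G, ∀ v : V, σ (H.connectedComponentMk v) = H.connectedComponentMk (g v)} ∧
      Nonempty (Q ≃* DihedralGroup (Nat.card H.ConnectedComponent)) :=
  statement0_general Γ H hpart hquot G hGaut hGpres hGtrans

end CubicFIG
end

section
/- Let Γ be a connected cubic vertex-transitive graph admitting a partition of its edge set into a 2-factor C and a 1-factor I such that Γ is of alternating cycle quotient type with respect to C. If C is preserved by a vertex-transitive subgroup G ≤ Aut(Γ) and the members of C are 4-cycles, then Γ is isomorphic to the honeycomb toroidal graph HTG(m,4,ℓ), where m = |C| and ℓ ∈ {0,1} has the same parity as m. Moreover, C is preserved by the full automorphism group Aut(Γ). -/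
namespace CubicFIG

open SimpleGraph

variable {V : Type*}

-- ===== auxiliary lemmas =====

lemma zmod4_cases (j : ZMod 4) : j = 0 ∨ j = 1 ∨ j = 2 ∨ j = 3 := by revert j; decide

lemma zmod4_diff_cases (j j' : ZMod 4) : j' = j ∨ j' = j + 1 ∨ j' = j + 2 ∨ j' = j + 3 := by
  revert j j'; decide

lemma zmod4_parity_class (b : ℕ) (hb : b < 2) (j : ZMod 4) :
    j.val % 2 = b ↔ (j = (if b = 0 then 0 else 1) ∨ j = (if b = 0 then 0 else 1) + 2) := by
  interval_cases b <;> revert j <;> decide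

lemma zmod4_parity_sub (t j : ZMod 4) (ht : t.val % 2 = 1) :
    (t - j).val % 2 = (1 + j.val) % 2 := by revert t j; decide

lemma zmod4_parity_add3 (j : ZMod 4) : (j + 3).val % 2 ≠ j.val % 2 := by
  revert j; decide

lemma zmod4_parity_of_sub (a b : ZMod 4) : (a - b).val % 2 = (a.val + b.val) % 2 := by
  revert a b; decide

lemma zmod4_parity_succ (j : ZMod 4) : (j + 1).val % 2 ≠ j.val % 2 := by
  revert j; decide

def ColSpec (H : SimpleGraph V) (c : ZMod 4 → V) : Prop :=
  (∀ j, H.Adj (c j) (c (j+1))) ∧ (∀ j, c j ≠ c (j+2))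

lemma colspec_inj (H : SimpleGraph V) {c : ZMod 4 → V} (h : ColSpec H c) :
    Function.Injective c := by
  have key : ∀ jj : ZMod 4, jj + 3 + 1 = jj := by decide
  intro j j' heq
  rcases zmod4_diff_cases j j' with h0 | h1 | h2 | h3
  · exact h0.symm
  · exact absurd (h1 ▸ heq) (h.1 j).ne
  · exact absurd (h2 ▸ heq) (h.2 j)
  · subst h3
    have := (h.1 (j+3)).ne
    rw [key j] at this
    exact absurd heq.symm this

def NextCol (H : SimpleGraph V) (o : V → V) (i : ℕ) (c c' : ZMod 4 → V) : Prop :=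
  ColSpec H c' ∧ ∀ j : ZMod 4, j.val % 2 = i % 2 → c' j = o (c j)

noncomputable def colSeq (H : SimpleGraph V) (o : V → V) (c0 : ZMod 4 → V) :
    ℕ → (ZMod 4 → V) :=
  fun i => Nat.rec c0 (fun i ci =>
    @dite _ (∃ c', NextCol H o i ci c') (Classical.dec _)
      (fun h => Classical.choose h) (fun _ => ci)) i

lemma colSeq_succ (H : SimpleGraph V) (o : V → V) (c0 : ZMod 4 → V) (i : ℕ) :
    colSeq H o c0 (i+1) = @dite _ (∃ c', NextCol H o i (colSeq H o c0 i) c')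
      (Classical.dec _) (fun h => Classical.choose h)
      (fun _ => colSeq H o c0 i) := rfl

-- (cycle_walk and det2 pasted here)
lemma det2 {W : Type*} (Q : SimpleGraph W) (hreg : ∀ w, (Q.neighborSet w).ncard = 2)
    {a b c c' : W} (hab : Q.Adj a b) (hc : Q.Adj b c) (hc' : Q.Adj b c')
    (hca : c ≠ a) (hc'a : c' ≠ a) : c = c' := by
  obtain ⟨x, y, hxy, hset⟩ := Set.ncard_eq_two.mp (hreg b)
  have ha : a ∈ Q.neighborSet b := hab.symm
  have hcm : c ∈ Q.neighborSet b := hc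
  have hc'm : c' ∈ Q.neighborSet b := hc'
  rw [hset] at ha hcm hc'm
  rcases ha with rfl | rfl <;> rcases hcm with rfl | rfl <;> rcases hc'm with rfl | rfl <;>
    simp_all

lemma cycle_walk {W : Type*} [Finite W] (Q : SimpleGraph W) (hconn : Q.Connected)
    (hreg : ∀ w, (Q.neighborSet w).ncard = 2) (K : ℕ → W)
    (hadj : ∀ i, Q.Adj (K i) (K (i+1))) (hnb : ∀ i, K i ≠ K (i+2)) :
    (∀ i, K (i + Nat.card W) = K i) ∧
    (∀ a b, a < Nat.card W → b < Nat.card W → K a = K b → a = b) ∧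
    (∀ w : W, ∃ i, i < Nat.card W ∧ K i = w) := by
  classical
  -- one-step determinism
  have step : ∀ i j, K i = K j → K (i+1) = K (j+1) → K (i+2) = K (j+2) := by
    intro i j h1 h2
    refine det2 Q hreg (hadj i) (hadj (i+1)) ?_ ?_ ?_
    · rw [h2]; exact hadj (j+1)
    · exact fun h => hnb i h.symm
    · rw [h1]; exact fun h => hnb j h.symm
  have stepdown : ∀ i j, K (i+1) = K (j+1) → K (i+2) = K (j+2) → K i = K j := by
    intro i j h1 h2
    refine det2 Q hreg (hadj (i+1)).symm (hadj i).symm ?_ (hnb i) ?_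
    · rw [h1]; exact (hadj j).symm
    · rw [h2]; exact fun h => hnb j h
  have hfwd : ∀ i j, K i = K j → K (i+1) = K (j+1) →
      ∀ t, K (i+t) = K (j+t) ∧ K (i+t+1) = K (j+t+1) := by
    intro i j h1 h2 t
    induction t with
    | zero => exact ⟨h1, h2⟩
    | succ t ih =>
      refine ⟨by rw [show i+(t+1) = i+t+1 by omega, show j+(t+1) = j+t+1 by omega]; exact ih.2, ?_⟩
      have := step (i+t) (j+t) ih.1 ih.2
      rw [show i+(t+1)+1 = i+t+2 by omega, show j+(t+1)+1 = j+t+2 by omega]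
      exact this
  have down : ∀ a b, K a = K (a+b) → K (a+1) = K (a+b+1) → K 0 = K b ∧ K 1 = K (b+1) := by
    intro a
    induction a with
    | zero => intro b h1 h2; exact ⟨by simpa using h1, by simpa using h2⟩
    | succ a ih =>
      intro b h1 h2
      rw [show a+1+b = a+b+1 by omega] at h1
      rw [show a+1+b+1 = a+b+2 by omega, show a+1+1 = a+2 by omega] at h2
      exact ih b (stepdown a (a+b) h1 h2) h1
  -- existence of a period
  have hper : ∃ d, 0 < d ∧ ∀ t, K (t + d) = K t := by
    obtain ⟨i, j, hne, heq⟩ :=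
      Finite.exists_ne_map_eq_of_infinite (f := fun i : ℕ => (K i, K (i+1)))
    have key : ∀ i j : ℕ, i < j → K i = K j → K (i+1) = K (j+1) →
        ∃ d, 0 < d ∧ ∀ t, K (t + d) = K t := by
      intro i j hij h1 h2
      have hd := down i (j - i) (by rw [show i+(j-i) = j by omega]; exact h1)
        (by rw [show i+(j-i)+1 = j+1 by omega]; exact h2)
      refine ⟨j - i, by omega, fun t => ?_⟩
      have := (hfwd 0 (j-i) hd.1 hd.2 t).1
      rw [Nat.zero_add] at this
      rw [Nat.add_comm t (j-i)]
      exact this.symm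
    have h1 : K i = K j := congrArg Prod.fst heq
    have h2 : K (i+1) = K (j+1) := congrArg Prod.snd heq
    rcases Nat.lt_or_ge i j with h | h
    · exact key i j h h1 h2
    · exact key j i (by omega) h1.symm h2.symm
  set p := Nat.find hper with hp_def
  obtain ⟨hp_pos, hp_per⟩ := Nat.find_spec hper
  have hp_min : ∀ d, 0 < d → d < p → ¬ ∀ t, K (t + d) = K t := by
    intro d hd hdp hall
    exact Nat.find_min hper hdp ⟨hd, hall⟩
  have hper' : ∀ t c, K (t + c * p) = K t := by
    intro t c
    induction c with
    | zero => simp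
    | succ c ih => rw [show t + (c+1)*p = (t + c*p) + p by ring]; rw [hp_per, ih]
  have hrange : ∀ t, ∃ r, r < p ∧ K t = K r := by
    intro t
    refine ⟨t % p, Nat.mod_lt _ hp_pos, ?_⟩
    conv_lhs => rw [show t = t % p + (t / p) * p by rw [Nat.mod_add_div']]
    exact hper' _ _
  -- neighborhoods along the walk
  have nbhdK : ∀ i, Q.neighborSet (K (i+1)) = {K i, K (i+2)} := by
    intro i
    refine (Set.eq_of_subset_of_ncard_le ?_ ?_ (Set.toFinite _)).symm
    · rintro x (rfl | rfl)
      · exact (hadj i).symm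
      · exact (hadj (i+1))
    · rw [hreg, Set.ncard_pair (hnb i)]
  -- surjectivity
  have hS : ∀ x : W, ∃ i, K i = x := by
    have hclosed : ∀ w x, (∃ i, K i = w) → Q.Adj w x → ∃ i, K i = x := by
      rintro w x ⟨i, rfl⟩ hadjwx
      have h1 : K (i + p) = K i := hp_per i
      have hx : x ∈ Q.neighborSet (K (i+p-1+1)) := by
        rw [show i+p-1+1 = i+p by omega, h1]; exact hadjwx
      rw [nbhdK] at hx
      rcases hx with rfl | rfl
      · exact ⟨i+p-1, rfl⟩
      · exact ⟨i+p-1+2, rfl⟩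
    have main : ∀ u v, Q.Walk u v → (∃ i, K i = u) → (∃ i, K i = v) := by
      intro u v w
      induction w with
      | nil => exact id
      | cons h _ ih => exact fun hu => ih (hclosed _ _ hu h)
    intro x
    obtain ⟨w⟩ := hconn.preconnected (K 0) x
    exact main _ _ w ⟨0, rfl⟩
  -- injectivity on [0, p)
  have aux : ∀ a b, a < b → b < p → K a ≠ K b := by
    intro a b hab hbp heq
    have hKb1 : K (b+1) ∈ Q.neighborSet (K (a+p-1+1)) := by
      rw [show a+p-1+1 = a+p by omega, hp_per a, heq]
      exact hadj b
    rw [nbhdK] at hKb1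
    have hsplit : K (b+1) = K (a+1) ∨ K (b+1) = K (a+p-1) := by
      rcases hKb1 with h | h
      · right; exact h
      · left; rw [h, show a+p-1+2 = (a+1)+p by omega]; exact hp_per (a+1)
    rcases hsplit with hcase | hcase
    · -- smaller period
      have hd := down a (b - a) (by rw [show a+(b-a) = b by omega]; exact heq)
        (by rw [show a+(b-a)+1 = b+1 by omega]; exact hcase.symm)
      refine hp_min (b-a) (by omega) (by omega) (fun t => ?_)
      have := (hfwd 0 (b-a) hd.1 hd.2 t).1
      rw [Nat.zero_add] at this
      rw [Nat.add_comm t (b-a)]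
      exact this.symm
    · -- reflection
      set M := a + (b+4)*p with hM_def
      have hMb : b + 4 ≤ M := by
        have : p ≥ 1 := hp_pos
        calc b + 4 ≤ (b+4)*p := by nlinarith
        _ ≤ M := by omega
      have hM0 : K M = K a := hper' a (b+4)
      have hM1 : K (M-1) = K (b+1) := by
        rw [show M-1 = (a+p-1) + (b+3)*p by rw [hM_def]; ring_nf; omega]
        rw [hper' (a+p-1) (b+3)]
        exact hcase.symm
      have refl : ∀ t, t + 2 ≤ M → K (b+t) = K (M-t) ∧ K (b+t+1) = K (M-t-1) := by
        intro t
        induction t with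
        | zero =>
          intro _
          exact ⟨by simpa using heq.symm.trans hM0.symm, by simpa using hM1.symm⟩
        | succ t ih =>
          intro ht
          have iht := ih (by omega)
          constructor
          · rw [show b+(t+1) = b+t+1 by omega, show M-(t+1) = M-t-1 by omega]
            exact iht.2
          · rw [show b+(t+1)+1 = (b+t)+2 by omega, show M-(t+1)-1 = M-t-2 by omega]
            refine det2 Q hreg (hadj (b+t)) (hadj (b+t+1)) ?_ ?_ ?_
            · rw [iht.2, show M-t-1 = (M-t-2)+1 by omega]
              exact (hadj (M-t-2)).symm
            · exact fun h => hnb (b+t) h.symm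
            · rw [iht.1, show M-t = (M-t-2)+2 by omega]
              exact fun h => hnb (M-t-2) h
      rcases Nat.even_or_odd (M - b) with ⟨t2, ht2⟩ | ⟨t2, ht2⟩
      · -- even : K (b+t2+1) = K (b+t2-1)
        have hb1 : 2 ≤ t2 := by omega
        have hr := (refl t2 (by omega)).2
        rw [show M - t2 - 1 = b + t2 - 1 by omega] at hr
        refine hnb (b+t2-1) ?_
        rw [show b+t2-1+2 = b+t2+1 by omega]
        exact hr.symm
      · -- odd : K (b+t2+1) = K (b+t2)
        have hr := (refl t2 (by omega)).2
        rw [show M - t2 - 1 = b + t2 by omega] at hr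
        exact (hadj (b+t2)).ne hr.symm
  -- p = Nat.card W
  have hinjOn : Set.InjOn K (Set.Iio p) := by
    intro a ha b hb heq
    rcases lt_trichotomy a b with h | h | h
    · exact absurd heq (aux a b h hb)
    · exact h
    · exact absurd heq.symm (aux b a h ha)
  have hSeq : Set.range K = K '' (Set.Iio p) := by
    apply Set.Subset.antisymm
    · rintro x ⟨t, rfl⟩
      obtain ⟨r, hr, hKr⟩ := hrange t
      exact ⟨r, hr, hKr.symm⟩
    · rintro x ⟨t, _, rfl⟩; exact ⟨t, rfl⟩
  have huniv : Set.range K = Set.univ := by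
    apply Set.eq_univ_of_forall
    intro x; obtain ⟨i, hi⟩ := hS x; exact ⟨i, hi⟩
  have hcard1 : Nat.card W = p := by
    have h1 : (Set.range K).ncard = p := by
      rw [hSeq, Set.ncard_image_of_injOn hinjOn]
      rw [show (Set.Iio p : Set ℕ) = ↑(Finset.range p) by ext x; simp [Finset.mem_range]]
      rw [Set.ncard_coe_finset, Finset.card_range]
    rw [← Set.ncard_univ, ← huniv, h1]
  refine ⟨fun i => by rw [hcard1]; exact hp_per i, ?_, ?_⟩
  · intro a b ha hb heq
    rw [hcard1] at ha hb
    exact hinjOn ha hb heq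
  · intro w
    obtain ⟨i, hi⟩ := hS w
    obtain ⟨r, hr, hKr⟩ := hrange i
    exact ⟨r, by rw [hcard1]; exact hr, by rw [← hKr]; exact hi⟩

lemma zmod4_parity_add_two (j : ZMod 4) : (j + 2).val % 2 = j.val % 2 := by
  revert j; decide

lemma htg_shift (m : ℕ) (hm : 3 ≤ m) (ℓ : ZMod 4) :
    Nonempty (HTG m 4 ℓ ≃g HTG m 4 (ℓ + 2)) := by
  classical
  haveI : NeZero m := ⟨by omega⟩
  set σ : ZMod m × ZMod 4 → ZMod m × ZMod 4 :=
    fun p => if p.1.val = m - 1 ∧ p.2.val % 2 = (m-1) % 2 then (p.1, p.2 + 2) else p with hσ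
  have hz : ∀ a : ZMod 4, a + 2 + 2 = a := by decide
  have hσpos : ∀ (i : ZMod m) (j : ZMod 4), i.val = m - 1 → j.val % 2 = (m-1) % 2 →
      σ (i, j) = (i, j + 2) := by
    intro i j hi hj
    rw [hσ]
    exact if_pos ⟨hi, hj⟩
  have hσneg : ∀ (i : ZMod m) (j : ZMod 4), ¬ (i.val = m - 1 ∧ j.val % 2 = (m-1) % 2) →
      σ (i, j) = (i, j) := by
    intro i j hi
    rw [hσ]
    exact if_neg hi
  have hσinv : Function.Involutive σ := by
    intro p
    obtain ⟨i, j⟩ := p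
    by_cases h : i.val = m - 1 ∧ j.val % 2 = (m-1) % 2
    · rw [hσpos i j h.1 h.2, hσpos i (j+2) h.1 (by rw [zmod4_parity_add_two]; exact h.2), hz]
    · rw [hσneg i j h, hσneg i j h]
  have hfwd : ∀ (l : ZMod 4) (p q : ZMod m × ZMod 4),
      (XaCycleRel m 4 (fun _ => 1) (fun _ => -1) p q ∨ XaLinkRel m 4 l p q) →
      (XaCycleRel m 4 (fun _ => 1) (fun _ => -1) (σ p) (σ q) ∨
        XaLinkRel m 4 (l + 2) (σ p) (σ q)) := by
    rintro l ⟨i, j⟩ ⟨i', j'⟩ (⟨hpar, h1, h2⟩ | ⟨hpar, hle, h1, h2⟩ | ⟨hpar, h1, h2, h3⟩)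
    · -- cycle edges
      have h1' : i = i' := h1
      subst h1'
      have h2' : j' = j + 1 ∨ j' = j + (-1) := h2
      have hpar' : j.val % 2 = i.val % 2 := hpar
      by_cases him : i.val = m - 1
      · have hqpar : ¬ (i.val = m - 1 ∧ j'.val % 2 = (m-1) % 2) := by
          rintro ⟨-, hb⟩
          rcases h2' with h | h <;> subst h
          · have := zmod4_parity_succ j
            omega
          · have := zmod4_parity_add3 j
            have h3 : ∀ x : ZMod 4, x + (-1) = x + 3 := by decide
            rw [h3 j] at hb
            omega
        rw [hσpos i j him (by omega), hσneg i j' hqpar]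
        refine Or.inl ⟨?_, rfl, ?_⟩
        · show (j+2).val % 2 = i.val % 2
          rw [zmod4_parity_add_two]
          exact hpar'
        · rcases h2' with h | h <;> subst h
          · exact Or.inr (by show j + 1 = j + 2 + (-1); ring)
          · exact Or.inl (by
              show j + (-1) = j + 2 + 1
              have : ∀ x : ZMod 4, x + (-1) = x + 2 + 1 := by decide
              exact this j)
      · rw [hσneg i j (by rintro ⟨ha, -⟩; exact him ha),
          hσneg i j' (by rintro ⟨ha, -⟩; exact him ha)]
        exact Or.inl ⟨hpar, h1, h2⟩
    · -- ordinary links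
      have h1' : i' = i + 1 := h1
      have h2' : j' = j := h2
      have hle' : i.val ≤ m - 2 := hle
      have hpar' : j.val % 2 = i.val % 2 := hpar
      have hival : i'.val = i.val + 1 := by
        have hc : ((i.val + 1 : ℕ) : ZMod m) = i + 1 := by
          push_cast
          rw [ZMod.natCast_rightInverse i]
        rw [h1', ← hc]
        exact ZMod.val_cast_of_lt (by have := ZMod.val_lt i; omega)
      rw [hσneg i j (by rintro ⟨ha, -⟩; omega),
        hσneg i' j' (by rintro ⟨ha, hb⟩; rw [hival] at ha; rw [h2'] at hb; omega)]
      exact Or.inr (Or.inl ⟨hpar, hle, h1, h2⟩)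
    · -- wrap links
      have h1' : i = ((m-1 : ℕ) : ZMod m) := h1
      have h2' : i' = 0 := h2
      have hival : i.val = m - 1 := by rw [h1']; exact ZMod.val_cast_of_lt (by omega)
      have hival' : i'.val = 0 := by rw [h2', ZMod.val_zero]
      rw [hσpos i j hival (by exact hpar), hσneg i' j' (by rintro ⟨ha, -⟩; omega)]
      refine Or.inr (Or.inr ⟨?_, h1, h2, ?_⟩)
      · show (j+2).val % 2 = (m-1) % 2
        rw [zmod4_parity_add_two]
        exact hpar
      · show j' = j + 2 + (l + 2)
        have hx : ∀ x y : ZMod 4, x + y = x + 2 + (y + 2) := by decide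
        rw [← hx j l]
        exact h3
  have hne : ∀ p q : ZMod m × ZMod 4, p ≠ q → σ p ≠ σ q :=
    fun p q h hc => h (by rw [← hσinv p, ← hσinv q, hc])
  have hstep : ∀ (l : ZMod 4) (p q : ZMod m × ZMod 4),
      (HTG m 4 l).Adj p q → (HTG m 4 (l+2)).Adj (σ p) (σ q) := by
    intro l p q hadj
    rw [HTG, XaGraph, SimpleGraph.fromRel_adj] at hadj ⊢
    obtain ⟨h0, h⟩ := hadj
    refine ⟨hne p q h0, ?_⟩
    rcases h with h | h
    · exact Or.inl (hfwd l p q h)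
    · exact Or.inr (hfwd l q p h)
  refine ⟨⟨Function.Involutive.toPerm σ hσinv, ?_⟩⟩
  intro p q
  constructor
  · intro h
    have h2 := hstep (ℓ+2) (σ p) (σ q) h
    rw [hz ℓ, hσinv p, hσinv q] at h2
    exact h2
  · exact hstep ℓ p q


/-- alternating type with 4-cycles gives `HTG(m,4,ℓ)`. -/
theorem statement1 {V : Type*} [Fintype V] (Γ H : SimpleGraph V)
    (hconn : Γ.Connected) (hvt : IsVertexTransitive Γ) (halt : AltCQT Γ H)
    (G : Subgroup (Equiv.Perm V))
    (hGaut : ∀ g ∈ G, IsAut Γ g) (hGpres : ∀ g ∈ G, Preserves H g)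
    (hGtrans : ∀ u v : V, ∃ g ∈ G, g u = v)
    (m : ℕ) (hm : m = Nat.card H.ConnectedComponent)
    (h4 : ∀ c : H.ConnectedComponent, c.supp.ncard = 4) :
    (∃ ℓ : ZMod 4, (ℓ = 0 ∨ ℓ = 1) ∧ ℓ.val % 2 = m % 2 ∧ Nonempty (Γ ≃g HTG m 4 ℓ)) ∧
    ∀ f : Equiv.Perm V, IsAut Γ f → Preserves H f := by
  classical
  obtain ⟨hcubic, ⟨hHle, hH2, hI1⟩, ⟨hQfin, hQconn, hQreg⟩, haltc⟩ := halt
  set comp := H.connectedComponentMk with hcomp_def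
  have hcompadj : ∀ u v : V, H.Adj u v → comp u = comp v :=
    fun u v h => SimpleGraph.ConnectedComponent.sound h.reachable
  -- outside neighbor
  have hIset : ∀ v : V, ∃ w, {w : V | Γ.Adj v w ∧ ¬ H.Adj v w} = {w} :=
    fun v => Set.ncard_eq_one.mp (hI1 v)
  choose o ho using hIset
  have hoadj : ∀ v, Γ.Adj v (o v) ∧ ¬ H.Adj v (o v) := by
    intro v
    have : o v ∈ {w : V | Γ.Adj v w ∧ ¬ H.Adj v w} := by rw [ho v]; rfl
    exact this
  have houniq : ∀ v w, Γ.Adj v w → ¬ H.Adj v w → w = o v := by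
    intro v w h1 h2
    have : w ∈ {w : V | Γ.Adj v w ∧ ¬ H.Adj v w} := ⟨h1, h2⟩
    rw [ho v] at this
    exact this
  have hoo : ∀ v, o (o v) = v := fun v =>
    (houniq (o v) v (hoadj v).1.symm (fun h => (hoadj v).2 h.symm)).symm
  have hoinj : ∀ u v : V, o u = o v → u = v := by
    intro u v h
    rw [← hoo u, h, hoo]
  -- neighbor set determination
  have hnbr_eq : ∀ v x y : V, H.Adj v x → H.Adj v y → x ≠ y → H.neighborSet v = {x, y} := by
    intro v x y h1 h2 hxy
    refine (Set.eq_of_subset_of_ncard_le ?_ ?_ (Set.toFinite _)).symm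
    · rintro w (rfl | rfl)
      · exact h1
      · exact h2
    · rw [hH2, Set.ncard_pair hxy]
  have hsupp_eq : ∀ a b c d : V, a ≠ b → a ≠ c → a ≠ d → b ≠ c → b ≠ d → c ≠ d →
      comp b = comp a → comp c = comp a → comp d = comp a →
      (comp a).supp = {a, b, c, d} := by
    intro a b c d hab hac had hbc hbd hcd h1 h2 h3
    refine (Set.eq_of_subset_of_ncard_le ?_ ?_ (Set.toFinite _)).symm
    · rintro w (rfl | rfl | rfl | rfl)
      · exact SimpleGraph.ConnectedComponent.mem_supp_iff _ _ |>.mpr rfl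
      · exact SimpleGraph.ConnectedComponent.mem_supp_iff _ _ |>.mpr h1
      · exact SimpleGraph.ConnectedComponent.mem_supp_iff _ _ |>.mpr h2
      · exact SimpleGraph.ConnectedComponent.mem_supp_iff _ _ |>.mpr h3
    · rw [h4]
      rw [Set.ncard_insert_of_notMem (by simp [hab, hac, had]),
        Set.ncard_insert_of_notMem (by simp [hbc, hbd]),
        Set.ncard_insert_of_notMem (by simp [hcd]), Set.ncard_singleton]
  have hmem_supp : ∀ (w : V) (c : H.ConnectedComponent), w ∈ c.supp ↔ comp w = c :=
    fun w c => SimpleGraph.ConnectedComponent.mem_supp_iff c w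
  -- the structure of each component: a 4-cycle  v - x - z - y - v
  have hstruct : ∀ v : V, ∃ x z y : V,
      (x ≠ y ∧ z ≠ v ∧ z ≠ x ∧ z ≠ y ∧ v ≠ x ∧ v ≠ y) ∧
      H.neighborSet v = {x, y} ∧ H.neighborSet x = {v, z} ∧
      H.neighborSet z = {x, y} ∧ H.neighborSet y = {v, z} ∧
      (comp v).supp = {v, x, z, y} := by
    intro v
    obtain ⟨x, y, hxy, hnv⟩ := Set.ncard_eq_two.mp (hH2 v)
    have hvx : H.Adj v x := by rw [← SimpleGraph.mem_neighborSet, hnv]; exact Or.inl rfl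
    have hvy : H.Adj v y := by rw [← SimpleGraph.mem_neighborSet, hnv]; exact Or.inr rfl
    obtain ⟨p, q, hpq, hnx0⟩ := Set.ncard_eq_two.mp (hH2 x)
    have hvmem : v ∈ H.neighborSet x := hvx.symm
    rw [hnx0] at hvmem
    obtain ⟨z, hnx, hzv⟩ : ∃ z, H.neighborSet x = {v, z} ∧ z ≠ v := by
      rcases hvmem with rfl | rfl
      · exact ⟨q, hnx0, fun h => hpq h.symm⟩
      · exact ⟨p, by rw [hnx0, Set.pair_comm], hpq⟩
    have hxz : H.Adj x z := by rw [← SimpleGraph.mem_neighborSet, hnx]; exact Or.inr rfl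
    have hzx : z ≠ x := fun h => H.irrefl (h ▸ hxz)
    have hvx' : v ≠ x := hvx.ne
    have hvy' : v ≠ y := hvy.ne
    -- z ≠ y
    have hzy : z ≠ y := by
      rintro rfl
      -- now the component of v contains the triangle-ish v,x,z with all nbhds filled
      have hnz : H.neighborSet z = {v, x} := hnbr_eq z v x hvy.symm hxz.symm hvx'
      have hsub : ({v, x, z} : Set V) ⊆ (comp v).supp := by
        intro w hw
        rw [hmem_supp]
        rcases hw with h | h | h
        · rw [h]
        · rw [h]; exact (hcompadj v x hvx).symm
        · rw [h]; exact (hcompadj v z hvy).symm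
      have hcard3 : ({v, x, z} : Set V).ncard < (comp v).supp.ncard := by
        rw [h4]
        have : ({v, x, z} : Set V).ncard ≤ 3 := by
          apply le_trans (Set.ncard_insert_le _ _)
          have : ({x, z} : Set V).ncard ≤ 2 := by
            apply le_trans (Set.ncard_insert_le _ _)
            simp
          omega
        omega
      obtain ⟨w, hw_supp, hw_not⟩ := Set.exists_mem_notMem_of_ncard_lt_ncard hcard3
      have hw_v : w ≠ v := fun h => hw_not (by rw [h]; exact Or.inl rfl)
      have hw_x : w ≠ x := fun h => hw_not (by rw [h]; exact Or.inr (Or.inl rfl))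
      have hw_z : w ≠ z := fun h => hw_not (by rw [h]; exact Or.inr (Or.inr rfl))
      have hsupp4 : (comp v).supp = {v, x, z, w} :=
        hsupp_eq v x z w hvx' (fun h => hzv h.symm) (fun h => hw_v h.symm)
          (fun h => hzx h.symm) (fun h => hw_x h.symm) (fun h => hw_z h.symm)
          (hcompadj v x hvx).symm (hcompadj v z hvy).symm ((hmem_supp _ _).mp hw_supp)
      -- w has a neighbor, which must be in the component, but all nbhds are full
      obtain ⟨t, ht⟩ : ∃ t, t ∈ H.neighborSet w :=
        Set.nonempty_of_ncard_ne_zero (by rw [hH2]; omega)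
      have hwt : H.Adj w t := ht
      have htw : w ∈ H.neighborSet t := hwt.symm
      have htsupp : t ∈ (comp v).supp := by
        rw [hmem_supp]
        rw [← (hmem_supp _ _).mp hw_supp]
        exact (hcompadj w t hwt).symm
      rw [hsupp4] at htsupp
      rcases htsupp with h | h | h | h
      · rw [h, hnv] at htw
        rcases htw with h' | h'
        · exact hw_x h'
        · exact hw_z h'
      · rw [h, hnx] at htw
        rcases htw with h' | h'
        · exact hw_v h'
        · exact hw_z h'
      · rw [h, hnz] at htw
        rcases htw with h' | h'
        · exact hw_v h'
        · exact hw_x h'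
      · exact H.irrefl (h ▸ hwt)
    -- main case
    have hcompx : comp x = comp v := (hcompadj v x hvx).symm
    have hcompy : comp y = comp v := (hcompadj v y hvy).symm
    have hcompz : comp z = comp v := by
      rw [← hcompx]; exact (hcompadj x z hxz).symm
    have hsupp4 : (comp v).supp = {v, x, z, y} :=
      hsupp_eq v x z y hvx' (fun h => hzv h.symm) hvy' (fun h => hzx h.symm) hxy hzy
        hcompx hcompz hcompy
    -- neighbor set of y
    obtain ⟨p', q', hpq', hny0⟩ := Set.ncard_eq_two.mp (hH2 y)
    have hvmem' : v ∈ H.neighborSet y := hvy.symm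
    rw [hny0] at hvmem'
    obtain ⟨t, hny, htv⟩ : ∃ t, H.neighborSet y = {v, t} ∧ t ≠ v := by
      rcases hvmem' with rfl | rfl
      · exact ⟨q', hny0, fun h => hpq' h.symm⟩
      · exact ⟨p', by rw [hny0, Set.pair_comm], hpq'⟩
    have hyt : H.Adj y t := by rw [← SimpleGraph.mem_neighborSet, hny]; exact Or.inr rfl
    have htz : t = z := by
      have htsupp : t ∈ (comp v).supp := by
        rw [hmem_supp, ← hcompy]
        exact (hcompadj y t hyt).symm
      rw [hsupp4] at htsupp
      rcases htsupp with h | h | h | h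
      · exact absurd h htv
      · exfalso
        have hmem : y ∈ H.neighborSet x := by rw [← h]; exact hyt.symm
        rw [hnx] at hmem
        rcases hmem with h' | h'
        · exact hvy' h'.symm
        · exact hzy h'.symm
      · exact h
      · exact absurd (h ▸ hyt) H.irrefl
    rw [htz] at hny hyt
    have hnz : H.neighborSet z = {x, y} := hnbr_eq z x y hxz.symm hyt.symm hxy
    exact ⟨x, z, y, ⟨hxy, hzv, hzx, hzy, hvx', hvy'⟩, hnv, hnx, hnz, hny, hsupp4⟩
  -- ======== Part 2 : every automorphism preserves H ========
  have hfour : ∀ a b c d : V, Γ.Adj a b → Γ.Adj b c → Γ.Adj c d → Γ.Adj d a →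
      a ≠ c → b ≠ d → H.Adj a b := by
    intro a b c d hab hbc hcd hda hac hbd
    by_contra hnH
    have hoab : b = o a := houniq a b hab hnH
    have hoba : a = o b := houniq b a hab.symm (fun h => hnH h.symm)
    have hHbc : H.Adj b c := by
      by_contra h
      exact hac (hoba.trans (houniq b c hbc h).symm)
    have hHda : H.Adj d a := by
      by_contra h
      exact hbd (hoab.trans (houniq a d hda.symm (fun hh => h hh.symm)).symm)
    have hHcd : H.Adj c d := by
      by_contra h
      refine haltc hHbc hab.symm (fun hh => hnH hh.symm) hcd h ?_
      exact hcompadj a d hHda.symm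
    -- all of b-c, c-d, d-a are H-edges, so a,b,c,d form an H-component
    have hcab : comp b = comp a := by
      rw [hcompadj b c hHbc, hcompadj c d hHcd, hcompadj d a hHda]
    have hcca : comp c = comp a := by
      rw [hcompadj c d hHcd, hcompadj d a hHda]
    have hcda : comp d = comp a := hcompadj d a hHda
    have hsupp4 : (comp a).supp = {a, b, c, d} :=
      hsupp_eq a b c d hab.ne hac hda.ne.symm hbc.ne hbd hcd.ne hcab hcca hcda
    have hnc : H.neighborSet c = {b, d} := hnbr_eq c b d hHbc.symm hHcd (fun h => hbd h)
    -- second neighbor of a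
    obtain ⟨p, q, hpq, hna0⟩ := Set.ncard_eq_two.mp (hH2 a)
    have hdmem : d ∈ H.neighborSet a := hHda.symm
    rw [hna0] at hdmem
    obtain ⟨t, hna, htd⟩ : ∃ t, H.neighborSet a = {d, t} ∧ t ≠ d := by
      rcases hdmem with rfl | rfl
      · exact ⟨q, hna0, fun h => hpq h.symm⟩
      · exact ⟨p, by rw [hna0, Set.pair_comm], hpq⟩
    have hat : H.Adj a t := by rw [← SimpleGraph.mem_neighborSet, hna]; exact Or.inr rfl
    have htsupp : t ∈ (comp a).supp := by
      rw [hmem_supp]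
      exact (hcompadj a t hat).symm
    rw [hsupp4] at htsupp
    rcases htsupp with rfl | rfl | rfl | rfl
    · exact H.irrefl hat
    · exact hnH hat
    · have : a ∈ H.neighborSet t := hat.symm
      rw [hnc] at this
      rcases this with rfl | rfl
      · exact hab.ne rfl
      · exact hda.ne rfl
    · exact htd rfl
  have hpart2 : ∀ f : Equiv.Perm V, IsAut Γ f → Preserves H f := by
    intro f hf u v huv
    obtain ⟨x, z, y, ⟨hxy, hzv, hzx, hzy, hvx, hvy⟩, hnu, hnx, hnz, hny, hsupp⟩ := hstruct u
    have hHux : H.Adj u x := by rw [← SimpleGraph.mem_neighborSet, hnu]; exact Or.inl rfl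
    have hHxz : H.Adj x z := by rw [← SimpleGraph.mem_neighborSet, hnx]; exact Or.inr rfl
    have hHzy : H.Adj z y := by rw [← SimpleGraph.mem_neighborSet, hnz]; exact Or.inr rfl
    have hHyu : H.Adj y u := by rw [← SimpleGraph.mem_neighborSet, hny]; exact Or.inl rfl
    have hv_mem : v ∈ H.neighborSet u := huv
    rw [hnu] at hv_mem
    have gadj : ∀ a b : V, H.Adj a b → Γ.Adj (f a) (f b) := fun a b h => (hf a b).mpr (hHle h)
    rcases hv_mem with rfl | rfl
    · exact hfour (f u) (f v) (f z) (f y) (gadj _ _ hHux) (gadj _ _ hHxz) (gadj _ _ hHzy)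
        (gadj _ _ hHyu) (f.injective.ne (fun h => hzv h.symm)) (f.injective.ne hxy)
    · refine hfour (f u) (f v) (f z) (f x) (gadj _ _ hHyu.symm) (gadj _ _ hHzy.symm)
        (gadj _ _ hHxz.symm) (gadj _ _ hHux.symm) (f.injective.ne (fun h => hzv h.symm))
        (f.injective.ne (fun h => hxy h.symm))
  refine ⟨?_, hpart2⟩
  -- ======== Part 1 ========
  haveI := hQfin
  -- characterization of quotient adjacency
  have hQadj : ∀ c d : H.ConnectedComponent, (quotientGraph Γ H).Adj c d ↔
      (c ≠ d ∧ ∃ u : V, comp u = c ∧ comp (o u) = d) := by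
    intro c d
    rw [quotientGraph, SimpleGraph.fromRel_adj]
    constructor
    · rintro ⟨hne, h⟩
      refine ⟨hne, ?_⟩
      rcases h with ⟨u, v, hadj, hu, hv⟩ | ⟨u, v, hadj, hu, hv⟩
      · have hnH : ¬ H.Adj u v := fun hH => hne (by rw [← hu, ← hv]; exact hcompadj u v hH)
        exact ⟨u, hu, by rw [← houniq u v hadj hnH]; exact hv⟩
      · have hnH : ¬ H.Adj v u := fun hH => hne (by rw [← hu, ← hv]; exact hcompadj v u hH)
        exact ⟨v, hv, by rw [← houniq v u hadj.symm hnH]; exact hu⟩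
    · rintro ⟨hne, u, hu, hv⟩
      exact ⟨hne, Or.inl ⟨u, o u, (hoadj u).1, hu, hv⟩⟩
  -- automorphisms in G commute with o and preserve components
  have hGo : ∀ g ∈ G, ∀ v : V, g (o v) = o (g v) := by
    intro g hg v
    refine houniq (g v) (g (o v)) ((hGaut g hg v (o v)).mpr (hoadj v).1) ?_
    intro hH
    have h2 := hGpres g⁻¹ (inv_mem hg) _ _ hH
    simp only [Equiv.Perm.inv_def, Equiv.symm_apply_apply] at h2
    exact (hoadj v).2 h2
  have hGcomp : ∀ g ∈ G, ∀ u w : V, comp u = comp w → comp (g u) = comp (g w) := by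
    intro g hg u w h
    rw [hcomp_def] at h ⊢
    obtain ⟨p⟩ := SimpleGraph.ConnectedComponent.exact h
    letI f : H →g H := ⟨fun x => g x, fun {a b} hab => hGpres g hg a b hab⟩
    exact SimpleGraph.ConnectedComponent.sound ⟨p.map f⟩
  -- no diagonals: the outside neighbour is in a different component
  have hdiag : ∀ v : V, comp (o v) ≠ comp v := by
    intro v hveq
    have hall : ∀ w : V, comp (o w) = comp w := by
      intro w
      obtain ⟨g, hg, hgv⟩ := hGtrans v w
      rw [← hgv, ← hGo g hg v]
      exact hGcomp g hg (o v) v hveq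
    obtain ⟨c⟩ := hQconn.nonempty
    have hempty : (quotientGraph Γ H).neighborSet c = ∅ := by
      ext d
      simp only [Set.mem_empty_iff_false, iff_false, SimpleGraph.mem_neighborSet]
      intro hadjd
      rw [hQadj] at hadjd
      obtain ⟨hne, w, hw, how⟩ := hadjd
      exact hne (by rw [← hw, ← how, hall w])
    have h2 := hQreg c
    rw [hempty] at h2
    simp at h2
  -- m ≥ 3
  have hm3 : 3 ≤ m := by
    obtain ⟨c⟩ := hQconn.nonempty
    obtain ⟨x, y, hxy, hset⟩ := Set.ncard_eq_two.mp (hQreg c)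
    have hx : (quotientGraph Γ H).Adj c x := by
      rw [← SimpleGraph.mem_neighborSet, hset]; exact Or.inl rfl
    have hy : (quotientGraph Γ H).Adj c y := by
      rw [← SimpleGraph.mem_neighborSet, hset]; exact Or.inr rfl
    have h3 : ({c, x, y} : Set H.ConnectedComponent).ncard = 3 := by
      rw [Set.ncard_insert_of_notMem (by simp [hx.ne, hy.ne]), Set.ncard_pair hxy]
    have hle : ({c, x, y} : Set H.ConnectedComponent).ncard ≤ Nat.card H.ConnectedComponent := by
      rw [← Set.ncard_univ]
      exact Set.ncard_le_ncard (Set.subset_univ _) Set.finite_univ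
    rw [h3, ← hm] at hle
    exact hle
  -- the alternating condition
  have halt2 : ∀ u w : V, H.Adj u w → comp (o u) ≠ comp (o w) :=
    fun u w h => haltc h (hoadj u).1 (hoadj u).2 (hoadj w).1 (hoadj w).2
  -- opposite vertices on a 4-cycle have outside neighbours in the same component
  have hopp : ∀ a b c : V, H.Adj a b → H.Adj b c → a ≠ c → comp (o a) = comp (o c) := by
    intro a b c hab hbc hac
    obtain ⟨x, z, y, ⟨hxy, hzv, hzx, hzy, hvx, hvy⟩, hna, hnx, hnz, hny, hsupp⟩ := hstruct a
    have hcz : c = z := by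
      have hb : b ∈ H.neighborSet a := hab
      rw [hna] at hb
      rcases hb with hb | hb
      · have hcmem : c ∈ H.neighborSet x := by rw [← hb]; exact hbc
        rw [hnx] at hcmem
        rcases hcmem with h | h
        · exact absurd h hac.symm
        · exact h
      · have hcmem : c ∈ H.neighborSet y := by rw [← hb]; exact hbc
        rw [hny] at hcmem
        rcases hcmem with h | h
        · exact absurd h hac.symm
        · exact h
    subst hcz
    by_contra hne
    have hAax : H.Adj a x := by rw [← SimpleGraph.mem_neighborSet, hna]; exact Or.inl rfl
    have hAxz : H.Adj x c := by rw [← SimpleGraph.mem_neighborSet, hnx]; exact Or.inr rfl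
    have hcxa : comp x = comp a := (hcompadj a x hAax).symm
    have hcca : comp c = comp a := by rw [← hcxa]; exact (hcompadj x c hAxz).symm
    have hQ1 : (quotientGraph Γ H).Adj (comp a) (comp (o a)) :=
      (hQadj _ _).mpr ⟨(hdiag a).symm, a, rfl, rfl⟩
    have hQ2 : (quotientGraph Γ H).Adj (comp a) (comp (o x)) :=
      (hQadj _ _).mpr ⟨fun h => hdiag x (by rw [← h, hcxa]), x, hcxa, rfl⟩
    have hQ3 : (quotientGraph Γ H).Adj (comp a) (comp (o c)) :=
      (hQadj _ _).mpr ⟨fun h => hdiag c (by rw [← h, hcca]), c, hcca, rfl⟩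
    have hAB : comp (o a) ≠ comp (o x) := halt2 a x hAax
    have hBC : comp (o x) ≠ comp (o c) := halt2 x c hAxz
    have hsub : ({comp (o a), comp (o x), comp (o c)} : Set H.ConnectedComponent)
        ⊆ (quotientGraph Γ H).neighborSet (comp a) := by
      rintro d (h | h | h) <;> rw [h]
      · exact hQ1
      · exact hQ2
      · exact hQ3
    have h3 : ({comp (o a), comp (o x), comp (o c)} : Set H.ConnectedComponent).ncard = 3 := by
      rw [Set.ncard_insert_of_notMem (by simp [hAB, hne]), Set.ncard_pair hBC]
    have hle := Set.ncard_le_ncard hsub (Set.toFinite _)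
    rw [hQreg, h3] at hle
    omega
  have hnadj : ∀ u w : V, comp u = comp w → ¬ H.Adj (o u) (o w) := by
    intro u w h hH
    have := halt2 (o u) (o w) hH
    rw [hoo, hoo] at this
    exact this h
  -- helper facts in ZMod 4
  have hz4 : ∀ a : ZMod 4, a + 1 ≠ a ∧ a + 2 ≠ a ∧ a + 3 ≠ a ∧ a + 2 ≠ a + 1 ∧
      a + 3 ≠ a + 1 ∧ a + 3 ≠ a + 2 ∧ a + 1 + 1 = a + 2 ∧ a + 2 + 1 = a + 3 ∧
      a + 3 + 1 = a ∧ a + 1 + 2 = a + 3 ∧ a + 2 + 2 = a ∧ a + 3 + 2 = a + 1 := by decide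
  -- existence of the next column
  have hexists : ∀ (i : ℕ) (c : ZMod 4 → V), ColSpec H c → ∃ c', NextCol H o i c c' := by
    intro i c hc
    set j0 : ZMod 4 := if i % 2 = 0 then 0 else 1 with hj0
    have hb2 : i % 2 < 2 := Nat.mod_lt _ (by omega)
    have hj0eq : j0 = if i % 2 = 0 then (0 : ZMod 4) else 1 := hj0
    have hpar : ∀ j : ZMod 4, j.val % 2 = i % 2 ↔ (j = j0 ∨ j = j0 + 2) := by
      intro j
      rw [hj0eq]
      exact zmod4_parity_class (i % 2) hb2 j
    have hopp_uw : comp (o (c j0)) = comp (o (c (j0 + 2))) := by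
      refine hopp (c j0) (c (j0 + 1)) (c (j0 + 2)) (hc.1 j0) ?_ (hc.2 j0)
      have := hc.1 (j0 + 1)
      rw [(hz4 j0).2.2.2.2.2.2.1] at this
      exact this
    have huw : o (c j0) ≠ o (c (j0 + 2)) := fun h => hc.2 j0 (hoinj _ _ h)
    have hnadj_uw : ¬ H.Adj (o (c j0)) (o (c (j0 + 2))) := by
      refine hnadj (c j0) (c (j0 + 2)) ?_
      rw [hcompadj (c j0) (c (j0 + 1)) (hc.1 j0)]
      refine hcompadj (c (j0 + 1)) (c (j0 + 2)) ?_
      have := hc.1 (j0 + 1)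
      rw [(hz4 j0).2.2.2.2.2.2.1] at this
      exact this
    obtain ⟨x, z, y, ⟨hxy, hzv, hzx, hzy, hvx, hvy⟩, hnu, hnx, hnz, hny, hsupp⟩ :=
      hstruct (o (c j0))
    have hwz : o (c (j0 + 2)) = z := by
      have hwsupp : o (c (j0 + 2)) ∈ (comp (o (c j0))).supp := (hmem_supp _ _).mpr hopp_uw.symm
      rw [hsupp] at hwsupp
      rcases hwsupp with h | h | h | h
      · exact absurd h.symm huw
      · exfalso
        apply hnadj_uw
        rw [h, ← SimpleGraph.mem_neighborSet, hnu]
        exact Or.inl rfl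
      · exact h
      · exfalso
        apply hnadj_uw
        rw [h, ← SimpleGraph.mem_neighborSet, hnu]
        exact Or.inr rfl
    have hAux : H.Adj (o (c j0)) x := by rw [← SimpleGraph.mem_neighborSet, hnu]; exact Or.inl rfl
    have hAxz : H.Adj x z := by rw [← SimpleGraph.mem_neighborSet, hnx]; exact Or.inr rfl
    have hAzy : H.Adj z y := by rw [← SimpleGraph.mem_neighborSet, hnz]; exact Or.inr rfl
    have hAyu : H.Adj y (o (c j0)) := by
      rw [← SimpleGraph.mem_neighborSet, hny]; exact Or.inl rfl
    set f' : ZMod 4 → V := fun j => if j = j0 then o (c j0) else if j = j0 + 1 then x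
      else if j = j0 + 2 then o (c (j0 + 2)) else y with hf'
    have e0 : f' j0 = o (c j0) := by simp [hf']
    have e1 : f' (j0 + 1) = x := by simp [hf', (hz4 j0).1]
    have e2 : f' (j0 + 2) = o (c (j0 + 2)) := by
      simp [hf', (hz4 j0).2.1, (hz4 j0).2.2.2.1]
    have e3 : f' (j0 + 3) = y := by
      simp [hf', (hz4 j0).2.2.1, (hz4 j0).2.2.2.2.1, (hz4 j0).2.2.2.2.2.1]
    refine ⟨f', ⟨?_, ?_⟩, ?_⟩
    · intro j
      rcases zmod4_diff_cases j0 j with h | h | h | h <;> subst h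
      · rw [e0, e1]; exact hAux
      · rw [(hz4 j0).2.2.2.2.2.2.1, e1, e2, hwz]; exact hAxz
      · rw [(hz4 j0).2.2.2.2.2.2.2.1, e2, e3, hwz]; exact hAzy
      · rw [(hz4 j0).2.2.2.2.2.2.2.2.1, e3, e0]; exact hAyu
    · intro j
      rcases zmod4_diff_cases j0 j with h | h | h | h <;> subst h
      · rw [e0, e2]; exact huw
      · rw [(hz4 j0).2.2.2.2.2.2.2.2.2.1, e1, e3]; exact hxy
      · rw [(hz4 j0).2.2.2.2.2.2.2.2.2.2.1, e2, e0]; exact huw.symm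
      · rw [(hz4 j0).2.2.2.2.2.2.2.2.2.2.2, e3, e1]; exact hxy.symm
    · intro j hj
      rw [hpar] at hj
      rcases hj with h | h <;> subst h
      · exact e0
      · exact e2
  -- the base column
  obtain ⟨v0⟩ : Nonempty V := by
    obtain ⟨c⟩ := hQconn.nonempty
    obtain ⟨u, _⟩ := c.exists_rep
    exact ⟨u⟩
  have hc0 : ∃ c0 : ZMod 4 → V, ColSpec H c0 := by
    obtain ⟨x, z, y, ⟨hxy, hzv, hzx, hzy, hvx, hvy⟩, hnv, hnx, hnz, hny, hsupp⟩ := hstruct v0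
    have hAvx : H.Adj v0 x := by rw [← SimpleGraph.mem_neighborSet, hnv]; exact Or.inl rfl
    have hAxz : H.Adj x z := by rw [← SimpleGraph.mem_neighborSet, hnx]; exact Or.inr rfl
    have hAzy : H.Adj z y := by rw [← SimpleGraph.mem_neighborSet, hnz]; exact Or.inr rfl
    have hAyv : H.Adj y v0 := by rw [← SimpleGraph.mem_neighborSet, hny]; exact Or.inl rfl
    set g0 : ZMod 4 → V := fun j => if j = 0 then v0 else if j = 1 then x
      else if j = 2 then z else y with hg0
    have ee0 : g0 0 = v0 := by simp [hg0]
    have ee1 : g0 1 = x := by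
      simp [hg0, show (1:ZMod 4) ≠ 0 from by decide]
    have ee2 : g0 2 = z := by
      simp [hg0, show (2:ZMod 4) ≠ 0 from by decide, show (2:ZMod 4) ≠ 1 from by decide]
    have ee3 : g0 3 = y := by
      simp [hg0, show (3:ZMod 4) ≠ 0 from by decide, show (3:ZMod 4) ≠ 1 from by decide,
        show (3:ZMod 4) ≠ 2 from by decide]
    refine ⟨g0, ?_, ?_⟩
    · intro j
      rcases zmod4_cases j with h | h | h | h <;> subst h
      · rw [show (0:ZMod 4)+1 = 1 by decide, ee0, ee1]; exact hAvx
      · rw [show (1:ZMod 4)+1 = 2 by decide, ee1, ee2]; exact hAxz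
      · rw [show (2:ZMod 4)+1 = 3 by decide, ee2, ee3]; exact hAzy
      · rw [show (3:ZMod 4)+1 = 0 by decide, ee3, ee0]; exact hAyv
    · intro j
      rcases zmod4_cases j with h | h | h | h <;> subst h
      · rw [show (0:ZMod 4)+2 = 2 by decide, ee0, ee2]; exact fun h => hzv h.symm
      · rw [show (1:ZMod 4)+2 = 3 by decide, ee1, ee3]; exact hxy
      · rw [show (2:ZMod 4)+2 = 0 by decide, ee2, ee0]; exact hzv
      · rw [show (3:ZMod 4)+2 = 1 by decide, ee3, ee1]; exact hxy.symm
  obtain ⟨c0, hc0spec⟩ := hc0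
  set C : ℕ → ZMod 4 → V := colSeq H o c0 with hC
  have hCspec : ∀ i, ColSpec H (C i) := by
    intro i
    induction i with
    | zero => exact hc0spec
    | succ i ih =>
      have h := hexists i (C i) ih
      show ColSpec H (colSeq H o c0 (i + 1))
      rw [colSeq_succ, dif_pos h]
      exact (Classical.choose_spec h).1
  have hnext : ∀ (i : ℕ) (j : ZMod 4), j.val % 2 = i % 2 → C (i + 1) j = o (C i j) := by
    intro i
    have h := hexists i (C i) (hCspec i)
    have : C (i + 1) = Classical.choose h := by
      show colSeq H o c0 (i + 1) = _
      rw [colSeq_succ, dif_pos h]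
    rw [this]
    exact (Classical.choose_spec h).2
  have hback : ∀ (i : ℕ) (j : ZMod 4), j.val % 2 = i % 2 → o (C (i + 1) j) = C i j := by
    intro i j hj
    rw [hnext i j hj, hoo]
  -- the components along the sequence
  set K : ℕ → H.ConnectedComponent := fun i => comp (C i 0) with hK
  have hKcol : ∀ (i : ℕ) (j : ZMod 4), comp (C i j) = K i := by
    intro i j
    have h01 : comp (C i 0) = comp (C i 1) := hcompadj _ _ ((hCspec i).1 0)
    have h12 : comp (C i 1) = comp (C i 2) := by
      have := hcompadj _ _ ((hCspec i).1 1)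
      rw [show (1 : ZMod 4) + 1 = 2 by decide] at this
      exact this
    have h23 : comp (C i 2) = comp (C i 3) := by
      have := hcompadj _ _ ((hCspec i).1 2)
      rw [show (2 : ZMod 4) + 1 = 3 by decide] at this
      exact this
    rcases zmod4_cases j with h | h | h | h <;> subst h
    · rfl
    · rw [← h01]
    · rw [← h12, ← h01]
    · rw [← h23, ← h12, ← h01]
  have hparrep : ∀ i : ℕ, ∃ j : ZMod 4, j.val % 2 = i % 2 := by
    intro i
    rcases Nat.mod_two_eq_zero_or_one i with h | h
    · exact ⟨0, by rw [h]; rfl⟩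
    · exact ⟨1, by rw [h]; rfl⟩
  have hKadj : ∀ i : ℕ, (quotientGraph Γ H).Adj (K i) (K (i + 1)) := by
    intro i
    obtain ⟨j, hj⟩ := hparrep i
    refine (hQadj _ _).mpr ⟨?_, C i j, hKcol i j, ?_⟩
    · rw [← hKcol i j, ← hKcol (i+1) j, hnext i j hj]
      exact (hdiag (C i j)).symm
    · rw [← hnext i j hj]
      exact hKcol (i+1) j
  have hKnb : ∀ i : ℕ, K i ≠ K (i + 2) := by
    intro i
    obtain ⟨j, hj⟩ := hparrep i
    have hj1 : (j + 1).val % 2 = (i + 1) % 2 := by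
      have h1 := zmod4_parity_succ j
      have h2 : (j+1).val % 2 < 2 := Nat.mod_lt _ (by omega)
      omega
    have hKi : K i = comp (o (C (i + 1) j)) := by
      rw [hback i j hj]; exact (hKcol i j).symm
    have hKi2 : K (i + 2) = comp (o (C (i + 1) (j + 1))) := by
      have h := hnext (i+1) (j+1) hj1
      rw [show i+1+1 = i+2 by omega] at h
      rw [← h]
      exact (hKcol (i+2) (j+1)).symm
    rw [hKi, hKi2]
    exact halt2 _ _ ((hCspec (i+1)).1 j)
  -- apply the abstract cycle-walk lemma
  obtain ⟨hper, hinj, hsurj⟩ := cycle_walk (quotientGraph Γ H) hQconn hQreg K hKadj hKnb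
  rw [← hm] at hper hinj hsurj
  have hKveq : ∀ i : ℕ, K i = comp (C i 0) := fun _ => rfl
  -- every vertex of the i-th component appears in column i
  have hsuppC : ∀ (i : ℕ) (v : V), comp v = K i → ∃ j, C i j = v := by
    intro i v hv
    obtain ⟨x, z, y, ⟨hxy, hzv, hzx, hzy, hvx, hvy⟩, hn0, hnx, hnz, hny, hsupp⟩ :=
      hstruct (C i 0)
    have hvmem : v ∈ (comp (C i 0)).supp := (hmem_supp _ _).mpr (by rw [hv, hKveq])
    rw [hsupp] at hvmem
    have hinjC := colspec_inj H (hCspec i)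
    have h1mem : C i 1 ∈ ({x, y} : Set V) := by
      rw [← hn0, SimpleGraph.mem_neighborSet]
      have := (hCspec i).1 0
      rw [show (0:ZMod 4)+1 = 1 by decide] at this
      exact this
    have h3mem : C i 3 ∈ ({x, y} : Set V) := by
      rw [← hn0, SimpleGraph.mem_neighborSet]
      have := (hCspec i).1 3
      rw [show (3:ZMod 4)+1 = 0 by decide] at this
      exact this.symm
    have h13 : C i 1 ≠ C i 3 := fun h => (by decide : (1 : ZMod 4) ≠ 3) (hinjC h)
    have hcombo : (C i 1 = x ∧ C i 3 = y) ∨ (C i 1 = y ∧ C i 3 = x) := by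
      rcases h1mem with h1 | h1 <;> rcases h3mem with h3 | h3
      · exact absurd (h1.trans h3.symm) h13
      · exact Or.inl ⟨h1, h3⟩
      · exact Or.inr ⟨h1, h3⟩
      · exact absurd (h1.trans h3.symm) h13
    have h2mem : C i 2 ∈ (comp (C i 0)).supp :=
      (hmem_supp _ _).mpr (by rw [hKcol i 2, hKveq])
    rw [hsupp] at h2mem
    have h2z : C i 2 = z := by
      rcases h2mem with h | h | h | h
      · exfalso
        have h02 := (hCspec i).2 0
        rw [show (0:ZMod 4)+2 = 2 by decide] at h02
        exact h02 h.symm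
      · exfalso
        rcases hcombo with ⟨h1, _⟩ | ⟨_, h3⟩
        · exact (by decide : (2:ZMod 4) ≠ 1) (hinjC (h.trans h1.symm))
        · exact (by decide : (2:ZMod 4) ≠ 3) (hinjC (h.trans h3.symm))
      · exact h
      · exfalso
        rcases hcombo with ⟨_, h3⟩ | ⟨h1, _⟩
        · exact (by decide : (2:ZMod 4) ≠ 3) (hinjC (h.trans h3.symm))
        · exact (by decide : (2:ZMod 4) ≠ 1) (hinjC (h.trans h1.symm))
    rcases hvmem with h | h | h | h
    · exact ⟨0, h.symm⟩
    · rcases hcombo with ⟨h1, _⟩ | ⟨_, h3⟩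
      · exact ⟨1, by rw [h1, h]⟩
      · exact ⟨3, by rw [h3, h]⟩
    · exact ⟨2, by rw [h2z, h]⟩
    · rcases hcombo with ⟨_, h3⟩ | ⟨h1, _⟩
      · exact ⟨3, by rw [h3, h]⟩
      · exact ⟨1, by rw [h1, h]⟩
  -- the bijection
  haveI : NeZero m := ⟨by omega⟩
  set φ : ZMod m × ZMod 4 → V := fun p => C p.1.val p.2 with hφ
  have hφinj : Function.Injective φ := by
    intro p q h
    have hcomps : K p.1.val = K q.1.val := by
      rw [← hKcol p.1.val p.2, ← hKcol q.1.val q.2]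
      exact congrArg comp h
    have h1 : p.1 = q.1 := by
      have := hinj p.1.val q.1.val (ZMod.val_lt p.1) (ZMod.val_lt q.1) hcomps
      exact ZMod.val_injective m this
    have h2 : p.2 = q.2 := by
      apply colspec_inj H (hCspec p.1.val)
      rw [hφ] at h
      simp only at h
      rw [h1]
      rw [h1] at h
      exact h
    exact Prod.ext h1 h2
  have hφsurj : Function.Surjective φ := by
    intro v
    obtain ⟨i, him, hKi⟩ := hsurj (comp v)
    obtain ⟨j, hj⟩ := hsuppC i v hKi.symm
    refine ⟨((i : ZMod m), j), ?_⟩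
    rw [hφ]
    simp only
    rw [ZMod.val_cast_of_lt him]
    exact hj
  -- opposite positions agree between any two columns representing the same cycle
  have hopp_eq : ∀ (a b : ℕ) (ja jb : ZMod 4), C a ja = C b jb →
      C a (ja + 2) = C b (jb + 2) := by
    intro a b ja jb heq
    obtain ⟨x, z, y, ⟨hxy, hzv, hzx, hzy, hvx, hvy⟩, hn0, hnx, hnz, hny, hsupp⟩ :=
      hstruct (C a ja)
    have key : ∀ (i : ℕ) (j : ZMod 4), C i j = C a ja → C i (j + 2) = z := by
      intro i j hij
      have hspec := hCspec i
      have hinjC := colspec_inj H hspec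
      have hnbru : H.neighborSet (C i j) = {C i (j+1), C i (j+3)} := by
        refine hnbr_eq _ _ _ (hspec.1 j) ?_ ?_
        · have := hspec.1 (j+3)
          rw [(hz4 j).2.2.2.2.2.2.2.2.1] at this
          exact this.symm
        · exact fun h => (hz4 j).2.2.2.2.1 (hinjC h.symm)
      have hmem2 : C i (j+2) ∈ (comp (C a ja)).supp := by
        rw [hmem_supp, ← hij, hKcol i (j+2), hKcol i j]
      rw [hsupp] at hmem2
      rcases hmem2 with h | h | h | h
      · exfalso
        rw [← hij] at h
        exact hspec.2 j h.symm
      · exfalso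
        have hx_nbr : C i (j+2) ∈ H.neighborSet (C a ja) := by
          rw [hn0, h]; exact Or.inl rfl
        rw [← hij, hnbru] at hx_nbr
        rcases hx_nbr with h' | h'
        · exact (hz4 j).2.2.2.1 (hinjC h')
        · exact (hz4 j).2.2.2.2.2.1 (hinjC h').symm
      · exact h
      · exfalso
        have hy_nbr : C i (j+2) ∈ H.neighborSet (C a ja) := by
          rw [hn0, h]; exact Or.inr rfl
        rw [← hij, hnbru] at hy_nbr
        rcases hy_nbr with h' | h'
        · exact (hz4 j).2.2.2.1 (hinjC h')
        · exact (hz4 j).2.2.2.2.2.1 (hinjC h').symm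
    rw [key a ja rfl, key b jb heq.symm]
  -- the twist
  have hKm0 : K m = K 0 := by have := hper 0; rwa [Nat.zero_add] at this
  set jm : ZMod 4 := if (m-1) % 2 = 0 then 0 else 1 with hjm
  have hjmpar : jm.val % 2 = (m-1) % 2 := by
    rw [hjm]
    rcases Nat.mod_two_eq_zero_or_one (m-1) with h | h <;> rw [h] <;> simp <;> decide
  have hparm : ∀ j : ZMod 4, j.val % 2 = (m-1) % 2 ↔ (j = jm ∨ j = jm + 2) := by
    intro j
    rw [hjm]
    exact zmod4_parity_class ((m-1) % 2) (Nat.mod_lt _ (by omega)) j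
  obtain ⟨j', hj'⟩ := hsuppC 0 (C m jm) (by rw [hKcol m jm, hKm0])
  have hj'par : j'.val % 2 = 1 := by
    by_contra hcon
    have h0 : j'.val % 2 = 0 := by
      have : j'.val % 2 < 2 := Nat.mod_lt _ (by omega)
      omega
    have h1 : C 1 j' = o (C 0 j') := hnext 0 j' (by rw [h0])
    have h2 : o (C m jm) = C (m-1) jm := by
      have hb := hback (m-1) jm hjmpar
      rwa [show m-1+1 = m by omega] at hb
    rw [hj', h2] at h1
    have := hinj 1 (m-1) (by omega) (by omega)
      (by rw [← hKcol 1 j', ← hKcol (m-1) jm, h1])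
    omega
  set ℓ : ZMod 4 := j' - jm with hℓ
  have hℓpar : ℓ.val % 2 = m % 2 := by
    rw [hℓ, zmod4_parity_sub j' jm hj'par]
    have := hjmpar
    omega
  have hwrap : ∀ j : ZMod 4, j.val % 2 = (m-1) % 2 → C m j = C 0 (j + ℓ) := by
    intro j hj
    rw [hparm] at hj
    rcases hj with h | h <;> subst h
    · have he : jm + ℓ = j' := by rw [hℓ]; ring
      rw [he]
      exact hj'.symm
    · have he : jm + 2 + ℓ = j' + 2 := by rw [hℓ]; ring
      rw [he]
      exact hopp_eq m 0 jm j' hj'.symm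
  -- neighborhoods within columns
  have hnbrC : ∀ (i : ℕ) (j : ZMod 4), H.neighborSet (C i j) = {C i (j+1), C i (j+3)} := by
    intro i j
    have hspec := hCspec i
    have hinjC := colspec_inj H hspec
    refine hnbr_eq _ _ _ (hspec.1 j) ?_ ?_
    · have := hspec.1 (j+3)
      rw [(hz4 j).2.2.2.2.2.2.2.2.1] at this
      exact this.symm
    · exact fun h => (hz4 j).2.2.2.2.1 (hinjC h.symm)
  have hsame : ∀ (a b : ℕ) (ja jb : ZMod 4), a < m → b < m → C a ja = C b jb →
      a = b ∧ ja = jb := by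
    intro a b ja jb ha hb h
    have hab : a = b := hinj a b ha hb (by rw [← hKcol a ja, ← hKcol b jb, h])
    subst hab
    exact ⟨rfl, colspec_inj H (hCspec a) h⟩
  have hedge : ∀ u w : V, Γ.Adj u w → H.Adj u w ∨ w = o u := by
    intro u w h
    by_cases hH : H.Adj u w
    · exact Or.inl hH
    · exact Or.inr (houniq u w h hH)
  have hvali : ∀ (a : ZMod m) (t : ℕ), a.val = t → a = (t : ZMod m) := by
    intro a t h
    rw [← h]
    exact (ZMod.natCast_rightInverse a).symm
  have hcast1 : ∀ a : ZMod m, ((a.val + 1 : ℕ) : ZMod m) = a + 1 := by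
    intro a
    push_cast
    rw [ZMod.natCast_rightInverse a]
  have hsucc : ∀ a b : ZMod m, a.val = b.val + 1 → a = b + 1 := by
    intro a b h
    rw [← hcast1 b, ← h]
    exact (ZMod.natCast_rightInverse a).symm
  -- the main adjacency correspondence
  have hmain : ∀ p q : ZMod m × ZMod 4, Γ.Adj (φ p) (φ q) ↔ (HTG m 4 ℓ).Adj p q := by
    intro p q
    obtain ⟨i, j⟩ := p
    obtain ⟨i', j'⟩ := q
    rw [HTG, XaGraph, SimpleGraph.fromRel_adj]
    have hj2 : j.val % 2 = 0 ∨ j.val % 2 = 1 := Nat.mod_two_eq_zero_or_one _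
    have hi2 : i.val % 2 = 0 ∨ i.val % 2 = 1 := Nat.mod_two_eq_zero_or_one _
    constructor
    · intro hadj
      have hne : ((i, j) : ZMod m × ZMod 4) ≠ (i', j') := by
        intro h
        rw [← h] at hadj
        exact Γ.irrefl hadj
      refine ⟨hne, ?_⟩
      have hadj' : Γ.Adj (C i.val j) (C i'.val j') := hadj
      rcases hedge _ _ hadj' with hH | hO
      · -- an edge of the 2-factor : same column
        have hmemq : C i'.val j' ∈ H.neighborSet (C i.val j) := hH
        rw [hnbrC] at hmemq
        have hieq : i = i' := by
          rcases hmemq with h | h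
          · exact (ZMod.val_injective m
              (hsame i'.val i.val j' (j+1) (ZMod.val_lt i') (ZMod.val_lt i) h).1).symm
          · exact (ZMod.val_injective m
              (hsame i'.val i.val j' (j+3) (ZMod.val_lt i') (ZMod.val_lt i) h).1).symm
        subst hieq
        have hj'eq : j' = j + 1 ∨ j' = j + 3 := by
          rcases hmemq with h | h
          · exact Or.inl (colspec_inj H (hCspec i.val) h)
          · exact Or.inr (colspec_inj H (hCspec i.val) h)
        rcases hj'eq with rfl | rfl
        · by_cases hp : j.val % 2 = i.val % 2
          · exact Or.inl (Or.inl ⟨hp, rfl, Or.inl rfl⟩)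
          · have hps := zmod4_parity_succ j
            have hb : (j+1).val % 2 = 0 ∨ (j+1).val % 2 = 1 := Nat.mod_two_eq_zero_or_one _
            have hp1 : (j+1).val % 2 = i.val % 2 := by omega
            refine Or.inr (Or.inl ⟨hp1, rfl, Or.inr ?_⟩)
            show j = (j + 1) + (-1)
            ring
        · by_cases hp : j.val % 2 = i.val % 2
          · refine Or.inl (Or.inl ⟨hp, rfl, Or.inr ?_⟩)
            show j + 3 = j + (-1)
            have : ∀ a : ZMod 4, a + 3 = a + (-1) := by decide
            exact this j
          · have hps := zmod4_parity_add3 j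
            have hb : (j+3).val % 2 = 0 ∨ (j+3).val % 2 = 1 := Nat.mod_two_eq_zero_or_one _
            have hp1 : (j+3).val % 2 = i.val % 2 := by omega
            refine Or.inr (Or.inl ⟨hp1, rfl, Or.inl ?_⟩)
            show j = (j + 3) + 1
            exact ((hz4 j).2.2.2.2.2.2.2.2.1).symm
      · -- an edge of the 1-factor
        by_cases hp : j.val % 2 = i.val % 2
        · by_cases him : i.val = m - 1
          · -- the wrap-around link
            have hpm : j.val % 2 = (m-1) % 2 := by rw [← him]; exact hp
            have h2 := hnext i.val j hp
            have h2' : C m j = o (C i.val j) := by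
              rw [show i.val + 1 = m by omega] at h2
              exact h2
            have h1 : C i'.val j' = C 0 (j + ℓ) := by
              rw [hO, ← h2']
              exact hwrap j hpm
            obtain ⟨hi0, hj0⟩ := hsame i'.val 0 j' (j+ℓ) (ZMod.val_lt i') (by omega) h1
            refine Or.inl (Or.inr (Or.inr ⟨hpm, hvali i (m-1) him, ?_, hj0⟩))
            show i' = 0
            exact (ZMod.val_eq_zero i').mp hi0
          · -- a forward link
            have h2 := hnext i.val j hp
            have h1 : C i'.val j' = C (i.val + 1) j := hO.trans h2.symm
            obtain ⟨hi1, hj1⟩ := hsame i'.val (i.val+1) j' j (ZMod.val_lt i')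
              (by have := ZMod.val_lt i; omega) h1
            refine Or.inl (Or.inr (Or.inl ⟨hp, ?_, hsucc i' i hi1, hj1⟩))
            show i.val ≤ m - 2
            have := ZMod.val_lt i
            omega
        · by_cases hi0 : i.val = 0
          · -- the backward wrap-around link
            have hpj : j.val % 2 = 1 := by omega
            set jj : ZMod 4 := j - ℓ with hjj
            have hjjpar : jj.val % 2 = (m-1) % 2 := by
              rw [hjj, zmod4_parity_of_sub j ℓ, ]
              have := hℓpar
              omega
            have hwj := hwrap jj hjjpar
            have hje : jj + ℓ = j := by rw [hjj]; ring
            rw [hje] at hwj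
            have hb := hback (m-1) jj hjjpar
            rw [show m-1+1 = m by omega] at hb
            -- o (C i.val j) = o (C 0 j) = o (C m jj) = C (m-1) jj
            have h1 : C i'.val j' = C (m-1) jj := by
              rw [hO, hi0, ← hwj, hb]
            obtain ⟨hi1, hj1⟩ := hsame i'.val (m-1) j' jj (ZMod.val_lt i') (by omega) h1
            refine Or.inr (Or.inr (Or.inr ⟨?_, hvali i' (m-1) hi1, (hvali i 0 hi0).trans Nat.cast_zero, ?_⟩))
            · show j'.val % 2 = (m-1) % 2
              rw [hj1]
              exact hjjpar
            · show j = j' + ℓ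
              rw [hj1, hjj]
              ring
          · -- a backward link
            have hpj : j.val % 2 = (i.val - 1) % 2 := by omega
            have hb := hback (i.val - 1) j (by omega)
            rw [show i.val - 1 + 1 = i.val by omega] at hb
            have h1 : C i'.val j' = C (i.val - 1) j := by rw [hO, hb]
            obtain ⟨hi1, hj1⟩ := hsame i'.val (i.val - 1) j' j (ZMod.val_lt i')
              (by have := ZMod.val_lt i; omega) h1
            refine Or.inr (Or.inr (Or.inl ⟨?_, ?_, ?_, hj1.symm⟩))
            · show j'.val % 2 = i'.val % 2
              rw [hj1, hi1]
              omega
            · show i'.val ≤ m - 2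
              rw [hi1]
              have := ZMod.val_lt i
              omega
            · show i = i' + 1
              refine hsucc i i' ?_
              rw [hi1]
              omega
    · rintro ⟨hne, hrel⟩
      have key : ∀ a b : ZMod m, ∀ ja jb : ZMod 4,
          (XaCycleRel m 4 (fun _ => 1) (fun _ => -1) (a, ja) (b, jb) ∨
            XaLinkRel m 4 ℓ (a, ja) (b, jb)) → Γ.Adj (C a.val ja) (C b.val jb) := by
        rintro a b ja jb (⟨hpar, h1, h2⟩ | ⟨hpar, hle, h1, h2⟩ | ⟨hpar, h1, h2, h3⟩)
        · -- cycle edge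
          simp only at hpar h1 h2
          have hab : a = b := h1
          subst hab
          rcases h2 with h | h
          · rw [h]
            exact hHle ((hCspec a.val).1 ja)
          · have hm1 : ∀ x : ZMod 4, x + (-1) = x + 3 := by decide
            rw [h, hm1]
            refine hHle ?_
            rw [← SimpleGraph.mem_neighborSet, hnbrC]
            exact Or.inr rfl
        · -- forward link
          have h1' : b = a + 1 := h1
          have h2' : jb = ja := h2
          have hle' : a.val ≤ m - 2 := hle
          have hpar' : ja.val % 2 = a.val % 2 := hpar
          have hbval : b.val = a.val + 1 := by
            rw [h1', ← hcast1 a]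
            exact ZMod.val_cast_of_lt (by have := ZMod.val_lt a; omega)
          rw [h2', hbval]
          have h := hnext a.val ja hpar'
          rw [h]
          exact (hoadj _).1
        · -- wrap link
          have h1' : a = ((m-1 : ℕ) : ZMod m) := h1
          have h2' : b = 0 := h2
          have h3' : jb = ja + ℓ := h3
          have hpar' : ja.val % 2 = (m-1) % 2 := hpar
          subst h3'
          have haval : a.val = m - 1 := by rw [h1']; exact ZMod.val_cast_of_lt (by omega)
          have hbval : b.val = 0 := by rw [h2', ZMod.val_zero]
          rw [haval, hbval, ← hwrap ja hpar']
          have hb := hnext (m-1) ja (by rw [hpar'])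
          rw [show m-1+1 = m by omega] at hb
          rw [hb]
          exact (hoadj _).1
      rcases hrel with h | h
      · exact key i i' j j' h
      · exact (key i' i j' j h).symm
  -- the isomorphism
  have hiso : Nonempty (Γ ≃g HTG m 4 ℓ) :=
    ⟨SimpleGraph.Iso.symm ⟨Equiv.ofBijective φ ⟨hφinj, hφsurj⟩, fun {p q} => hmain p q⟩⟩
  rcases zmod4_cases ℓ with h | h | h | h
  · exact ⟨ℓ, Or.inl h, hℓpar, hiso⟩
  · exact ⟨ℓ, Or.inr h, hℓpar, hiso⟩
  · obtain ⟨e0⟩ := hiso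
    obtain ⟨e1⟩ := htg_shift m hm3 ℓ
    refine ⟨ℓ + 2, Or.inl (by rw [h]; decide), ?_, ⟨e0.trans e1⟩⟩
    rw [zmod4_parity_add_two]
    exact hℓpar
  · obtain ⟨e0⟩ := hiso
    obtain ⟨e1⟩ := htg_shift m hm3 ℓ
    refine ⟨ℓ + 2, Or.inr (by rw [h]; decide), ?_, ⟨e0.trans e1⟩⟩
    rw [zmod4_parity_add_two]
    exact hℓpar


end CubicFIG
end

section
/- Let Γ = X_a(m,n,S,ℓ), where the parameters satisfy all assumptions of the construction. Then for each even q ∈ ℤ_n both of the following hold: (i) for any i with 1 ≤ i ≤ m−2, Γ is isomorphic to X_a(m,n,S',ℓ), where S' is obtained from S by replacing {a_i,b_i} and {a_{i+1},b_{i+1}} by {a_i−q, b_i−q} and {a_{i+1}+q, b_{i+1}+q}, respectively; (ii) Γ is isomorphic to X_a(m,n,S'',ℓ−q), where S'' is obtained from S by replacing {a_{m−1},b_{m−1}} by {a_{m−1}−q, b_{m−1}−q}. -/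
namespace CubicFIG

open SimpleGraph

variable {V : Type*}

section Statement3Aux

variable {m n : ℕ}

private lemma par_add [NeZero n] (hn2 : n % 2 = 0) (x y : ZMod n) :
    (x + y).val % 2 = (x.val + y.val) % 2 := by
  rw [ZMod.val_add, Nat.mod_mod_of_dvd _ (by omega : (2:ℕ) ∣ n)]

private lemma par_neg [NeZero n] (hn2 : n % 2 = 0) (y : ZMod n) :
    (-y).val % 2 = y.val % 2 := by
  have h := par_add hn2 y (-y)
  simp only [add_neg_cancel, ZMod.val_zero] at h
  omega

/-- The parity-dependent shift map on `ZMod m × ZMod n`. -/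
private def psh (c : ZMod m → ℕ → ZMod n) (u : ZMod m × ZMod n) : ZMod m × ZMod n :=
  (u.1, u.2 + c u.1 (u.2.val % 2))

private lemma psh_cancel [NeZero n] (hn2 : n % 2 = 0) (c : ZMod m → ℕ → ZMod n)
    (hceven : ∀ i p, (c i p).val % 2 = 0) (u : ZMod m × ZMod n) :
    psh (fun i p => -(c i p)) (psh c u) = u := by
  obtain ⟨i, j⟩ := u
  have h := par_add hn2 j (c i (j.val % 2))
  have hc := hceven i (j.val % 2)
  have hp : (j + c i (j.val % 2)).val % 2 = j.val % 2 := by omega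
  simp only [psh, hp, Prod.mk.injEq]
  refine ⟨by trivial, by ring⟩

private def pshEquiv [NeZero n] (hn2 : n % 2 = 0) (c : ZMod m → ℕ → ZMod n)
    (hceven : ∀ i p, (c i p).val % 2 = 0) : Equiv.Perm (ZMod m × ZMod n) where
  toFun := psh c
  invFun := psh (fun i p => -(c i p))
  left_inv := psh_cancel hn2 c hceven
  right_inv u := by
    have h := psh_cancel hn2 (fun i p => -(c i p))
      (fun i p => by rw [par_neg hn2]; exact hceven i p) u
    simpa using h

private lemma homRel [NeZero n] (hm : 3 ≤ m) (hn2 : n % 2 = 0)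
    (a b a' b' : ZMod m → ZMod n) (ℓ ℓ' : ZMod n) (c : ZMod m → ℕ → ZMod n)
    (hodd_a : ∀ i, (a i).val % 2 = 1) (hodd_b : ∀ i, (b i).val % 2 = 1)
    (hℓ : ℓ.val % 2 = m % 2)
    (hceven : ∀ i p, (c i p).val % 2 = 0)
    (ha' : ∀ i, a' i = a i + c i ((i.val % 2 + 1) % 2) - c i (i.val % 2))
    (hb' : ∀ i, b' i = b i + c i ((i.val % 2 + 1) % 2) - c i (i.val % 2))
    (hlink : ∀ i : ZMod m, i.val ≤ m - 2 → c (i + 1) (i.val % 2) = c i (i.val % 2))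
    (hℓ' : ℓ' = ℓ + c 0 1 - c ((m - 1 : ℕ) : ZMod m) ((m - 1) % 2))
    (u v : ZMod m × ZMod n)
    (h : XaCycleRel m n a b u v ∨ XaLinkRel m n ℓ u v) :
    XaCycleRel m n a' b' (psh c u) (psh c v) ∨ XaLinkRel m n ℓ' (psh c u) (psh c v) := by
  obtain ⟨i, j⟩ := u
  obtain ⟨i', j'⟩ := v
  simp only [XaCycleRel, XaLinkRel, psh] at h ⊢
  rcases h with ⟨hpar, h1, h2⟩ | ⟨hpar, hle, hv1, hv2⟩ | ⟨hpar, hu1, hv1, hv2⟩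
  · left
    have hceq : (j + c i (j.val % 2)).val % 2 = i.val % 2 := by
      have h3 := par_add hn2 j (c i (j.val % 2))
      have h4 := hceven i (j.val % 2)
      omega
    refine ⟨hceq, h1, ?_⟩
    rcases h2 with h2 | h2
    · left
      have hjp : j'.val % 2 = (i.val % 2 + 1) % 2 := by
        rw [h2, par_add hn2]
        have := hodd_a i
        omega
      rw [hjp, ← h1, h2, ha' i, hpar]
      ring
    · right
      have hjp : j'.val % 2 = (i.val % 2 + 1) % 2 := by
        rw [h2, par_add hn2]
        have := hodd_b i
        omega
      rw [hjp, ← h1, h2, hb' i, hpar]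
      ring
  · right; left
    have hceq : (j + c i (j.val % 2)).val % 2 = i.val % 2 := by
      have h3 := par_add hn2 j (c i (j.val % 2))
      have h4 := hceven i (j.val % 2)
      omega
    refine ⟨hceq, hle, hv1, ?_⟩
    rw [hv2, hv1, hpar, hlink i hle]
  · right; right
    have hceq : (j + c i (j.val % 2)).val % 2 = (m - 1) % 2 := by
      have h3 := par_add hn2 j (c i (j.val % 2))
      have h4 := hceven i (j.val % 2)
      omega
    refine ⟨hceq, hu1, hv1, ?_⟩
    have hjp : j'.val % 2 = 1 := by
      rw [hv2, par_add hn2]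
      omega
    rw [hjp, hv1, hv2, hu1, hℓ', hpar]
    ring

private lemma isoXa (hm : 3 ≤ m) (hn4 : 4 ≤ n) (hn2 : n % 2 = 0)
    (a b a' b' : ZMod m → ZMod n) (ℓ ℓ' : ZMod n) (c : ZMod m → ℕ → ZMod n)
    (hodd_a : ∀ i, (a i).val % 2 = 1) (hodd_b : ∀ i, (b i).val % 2 = 1)
    (hℓ : ℓ.val % 2 = m % 2)
    (hceven : ∀ i p, (c i p).val % 2 = 0)
    (ha' : ∀ i, a' i = a i + c i ((i.val % 2 + 1) % 2) - c i (i.val % 2))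
    (hb' : ∀ i, b' i = b i + c i ((i.val % 2 + 1) % 2) - c i (i.val % 2))
    (hlink : ∀ i : ZMod m, i.val ≤ m - 2 → c (i + 1) (i.val % 2) = c i (i.val % 2))
    (hℓ' : ℓ' = ℓ + c 0 1 - c ((m - 1 : ℕ) : ZMod m) ((m - 1) % 2)) :
    Nonempty (XaGraph m n a b ℓ ≃g XaGraph m n a' b' ℓ') := by
  haveI : NeZero n := ⟨by omega⟩
  have parmix : ∀ x y z : ZMod n,
      (x + y - z).val % 2 = (x.val % 2 + y.val % 2 + z.val % 2) % 2 := by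
    intro x y z
    have h1 := par_add hn2 (x + y) (-z)
    have h2 := par_add hn2 x y
    have h3 := par_neg hn2 z
    rw [sub_eq_add_neg]
    omega
  have hodd_a' : ∀ i, (a' i).val % 2 = 1 := by
    intro i
    rw [ha' i, parmix]
    have := hodd_a i
    have := hceven i ((i.val % 2 + 1) % 2)
    have := hceven i (i.val % 2)
    omega
  have hodd_b' : ∀ i, (b' i).val % 2 = 1 := by
    intro i
    rw [hb' i, parmix]
    have := hodd_b i
    have := hceven i ((i.val % 2 + 1) % 2)
    have := hceven i (i.val % 2)
    omega
  have hℓ'2 : ℓ'.val % 2 = m % 2 := by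
    rw [hℓ', parmix]
    have := hceven 0 1
    have := hceven ((m - 1 : ℕ) : ZMod m) ((m - 1) % 2)
    omega
  have hceven' : ∀ i p, ((fun i p => -(c i p)) i p).val % 2 = 0 := by
    intro i p
    simpa [par_neg hn2] using hceven i p
  have fwd := homRel hm hn2 a b a' b' ℓ ℓ' c hodd_a hodd_b hℓ hceven ha' hb' hlink hℓ'
  have bwd := homRel hm hn2 a' b' a b ℓ' ℓ (fun i p => -(c i p)) hodd_a' hodd_b' hℓ'2 hceven'
      (fun i => by rw [ha' i]; ring)
      (fun i => by rw [hb' i]; ring)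
      (fun i hle => by rw [hlink i hle])
      (by rw [hℓ']; ring)
  have cancel := psh_cancel hn2 c hceven
  refine ⟨⟨pshEquiv hn2 c hceven, @fun u v => ?_⟩⟩
  show (XaGraph m n a' b' ℓ').Adj (psh c u) (psh c v) ↔ (XaGraph m n a b ℓ).Adj u v
  simp only [XaGraph, fromRel_adj]
  constructor
  · rintro ⟨hne, hr⟩
    refine ⟨fun e => hne (by rw [e]), ?_⟩
    rcases hr with h | h
    · have h2 := bwd (psh c u) (psh c v) h
      rw [cancel, cancel] at h2
      exact Or.inl h2
    · have h2 := bwd (psh c v) (psh c u) h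
      rw [cancel, cancel] at h2
      exact Or.inr h2
  · rintro ⟨hne, hr⟩
    refine ⟨?_, hr.imp (fwd u v) (fwd v u)⟩
    intro e
    apply hne
    have := congrArg (psh (fun i p => -(c i p))) e
    rwa [cancel, cancel] at this

end Statement3Aux

/-- isomorphisms shifting the signature by an even `q`. -/
theorem statement3 (m n : ℕ) (a b : ZMod m → ZMod n) (ℓ : ZMod n)
    (hadm : Admissible m n a b ℓ) (q : ZMod n) (hq : q.val % 2 = 0) :
    (∀ t : ℕ, 1 ≤ t → t ≤ m - 2 →
      Nonempty (XaGraph m n a b ℓ ≃g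
        XaGraph m n
          (fun i => if i = (t : ZMod m) then a i - q
            else if i = (t : ZMod m) + 1 then a i + q else a i)
          (fun i => if i = (t : ZMod m) then b i - q
            else if i = (t : ZMod m) + 1 then b i + q else b i) ℓ)) ∧
    Nonempty (XaGraph m n a b ℓ ≃g
      XaGraph m n
        (fun i => if i = ((m - 1 : ℕ) : ZMod m) then a i - q else a i)
        (fun i => if i = ((m - 1 : ℕ) : ZMod m) then b i - q else b i) (ℓ - q)) := by
  obtain ⟨hm, hn4, hn2, hℓ, ha0, hb0, hab⟩ := hadm
  haveI : NeZero m := ⟨by omega⟩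
  haveI : NeZero n := ⟨by omega⟩
  haveI : Fact (1 < m) := ⟨by omega⟩
  have hodd_a : ∀ i, (a i).val % 2 = 1 := fun i => (hab i).2.1
  have hodd_b : ∀ i, (b i).val % 2 = 1 := fun i => (hab i).2.2.1
  have hm1val : ((m - 1 : ℕ) : ZMod m).val = m - 1 := ZMod.val_cast_of_lt (by omega)
  have hsucc : ∀ i : ZMod m, i.val ≤ m - 2 → (i + 1).val = i.val + 1 := by
    intro i hi
    rw [ZMod.val_add, ZMod.val_one]
    exact Nat.mod_eq_of_lt (by omega)
  have hvalinj : ∀ (i : ZMod m) (s : ℕ), i.val = s → i = (s : ZMod m) := by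
    intro i s h
    rw [← h, ZMod.natCast_zmod_val]
  constructor
  · intro t ht1 ht2
    have htval : ((t : ℕ) : ZMod m).val = t := ZMod.val_cast_of_lt (by omega)
    have ht1val : ((t : ZMod m) + 1).val = t + 1 := by
      rw [hsucc _ (by rw [htval]; omega), htval]
    refine isoXa hm hn4 hn2 a b _ _ ℓ ℓ
      (fun i p => if (i.val = t ∨ i.val = t + 1) ∧ p = t % 2 then q else 0)
      hodd_a hodd_b hℓ ?_ ?_ ?_ ?_ ?_
    · intro i p
      split_ifs
      · exact hq
      · simp
    · intro i
      by_cases h1 : i = (t : ZMod m)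
      · have hv : i.val = t := by rw [h1, htval]
        have e1 : ¬((i.val = t ∨ i.val = t + 1) ∧ (i.val % 2 + 1) % 2 = t % 2) := by omega
        have e2 : (i.val = t ∨ i.val = t + 1) ∧ i.val % 2 = t % 2 := ⟨Or.inl hv, by omega⟩
        rw [if_pos h1, if_neg e1, if_pos e2]
        ring
      · by_cases h2 : i = (t : ZMod m) + 1
        · have hv : i.val = t + 1 := by rw [h2, ht1val]
          have e1 : (i.val = t ∨ i.val = t + 1) ∧ (i.val % 2 + 1) % 2 = t % 2 :=
            ⟨Or.inr hv, by omega⟩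
          have e2 : ¬((i.val = t ∨ i.val = t + 1) ∧ i.val % 2 = t % 2) := by omega
          rw [if_neg h1, if_pos h2, if_pos e1, if_neg e2]
          ring
        · have hv1 : i.val ≠ t := fun h => h1 (hvalinj i t h)
          have hv2 : i.val ≠ t + 1 := by
            intro h
            exact h2 (by rw [hvalinj i (t + 1) h]; push_cast; ring)
          have e1 : ¬((i.val = t ∨ i.val = t + 1) ∧ (i.val % 2 + 1) % 2 = t % 2) := by omega
          have e2 : ¬((i.val = t ∨ i.val = t + 1) ∧ i.val % 2 = t % 2) := by omega
          rw [if_neg h1, if_neg h2, if_neg e1, if_neg e2]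
          ring
    · intro i
      by_cases h1 : i = (t : ZMod m)
      · have hv : i.val = t := by rw [h1, htval]
        have e1 : ¬((i.val = t ∨ i.val = t + 1) ∧ (i.val % 2 + 1) % 2 = t % 2) := by omega
        have e2 : (i.val = t ∨ i.val = t + 1) ∧ i.val % 2 = t % 2 := ⟨Or.inl hv, by omega⟩
        rw [if_pos h1, if_neg e1, if_pos e2]
        ring
      · by_cases h2 : i = (t : ZMod m) + 1
        · have hv : i.val = t + 1 := by rw [h2, ht1val]
          have e1 : (i.val = t ∨ i.val = t + 1) ∧ (i.val % 2 + 1) % 2 = t % 2 :=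
            ⟨Or.inr hv, by omega⟩
          have e2 : ¬((i.val = t ∨ i.val = t + 1) ∧ i.val % 2 = t % 2) := by omega
          rw [if_neg h1, if_pos h2, if_pos e1, if_neg e2]
          ring
        · have hv1 : i.val ≠ t := fun h => h1 (hvalinj i t h)
          have hv2 : i.val ≠ t + 1 := by
            intro h
            exact h2 (by rw [hvalinj i (t + 1) h]; push_cast; ring)
          have e1 : ¬((i.val = t ∨ i.val = t + 1) ∧ (i.val % 2 + 1) % 2 = t % 2) := by omega
          have e2 : ¬((i.val = t ∨ i.val = t + 1) ∧ i.val % 2 = t % 2) := by omega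
          rw [if_neg h1, if_neg h2, if_neg e1, if_neg e2]
          ring
    · intro i hi
      rw [hsucc i hi]
      have key : ((i.val + 1 = t ∨ i.val + 1 = t + 1) ∧ i.val % 2 = t % 2) ↔
          ((i.val = t ∨ i.val = t + 1) ∧ i.val % 2 = t % 2) := by omega
      simp only [key]
    · have e1 : ¬(((0 : ZMod m).val = t ∨ (0 : ZMod m).val = t + 1) ∧ 1 = t % 2) := by
        rw [ZMod.val_zero]
        omega
      have e2 : ¬((((m - 1 : ℕ) : ZMod m).val = t ∨ ((m - 1 : ℕ) : ZMod m).val = t + 1) ∧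
          (m - 1) % 2 = t % 2) := by
        rw [hm1val]
        omega
      rw [if_neg e1, if_neg e2]
      ring
  · refine isoXa hm hn4 hn2 a b _ _ ℓ (ℓ - q)
      (fun i p => if i.val = m - 1 ∧ p = (m - 1) % 2 then q else 0)
      hodd_a hodd_b hℓ ?_ ?_ ?_ ?_ ?_
    · intro i p
      split_ifs
      · exact hq
      · simp
    · intro i
      by_cases h1 : i = ((m - 1 : ℕ) : ZMod m)
      · have hv : i.val = m - 1 := by rw [h1, hm1val]
        have e1 : ¬(i.val = m - 1 ∧ (i.val % 2 + 1) % 2 = (m - 1) % 2) := by omega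
        have e2 : i.val = m - 1 ∧ i.val % 2 = (m - 1) % 2 := ⟨hv, by omega⟩
        rw [if_pos h1, if_neg e1, if_pos e2]
        ring
      · have hv : i.val ≠ m - 1 := fun h => h1 (hvalinj i (m - 1) h)
        have e1 : ¬(i.val = m - 1 ∧ (i.val % 2 + 1) % 2 = (m - 1) % 2) := by omega
        have e2 : ¬(i.val = m - 1 ∧ i.val % 2 = (m - 1) % 2) := by omega
        rw [if_neg h1, if_neg e1, if_neg e2]
        ring
    · intro i
      by_cases h1 : i = ((m - 1 : ℕ) : ZMod m)
      · have hv : i.val = m - 1 := by rw [h1, hm1val]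
        have e1 : ¬(i.val = m - 1 ∧ (i.val % 2 + 1) % 2 = (m - 1) % 2) := by omega
        have e2 : i.val = m - 1 ∧ i.val % 2 = (m - 1) % 2 := ⟨hv, by omega⟩
        rw [if_pos h1, if_neg e1, if_pos e2]
        ring
      · have hv : i.val ≠ m - 1 := fun h => h1 (hvalinj i (m - 1) h)
        have e1 : ¬(i.val = m - 1 ∧ (i.val % 2 + 1) % 2 = (m - 1) % 2) := by omega
        have e2 : ¬(i.val = m - 1 ∧ i.val % 2 = (m - 1) % 2) := by omega
        rw [if_neg h1, if_neg e1, if_neg e2]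
        ring
    · intro i hi
      rw [hsucc i hi]
      have key : (i.val + 1 = m - 1 ∧ i.val % 2 = (m - 1) % 2) ↔
          (i.val = m - 1 ∧ i.val % 2 = (m - 1) % 2) := by omega
      simp only [key]
    · have e1 : ¬((0 : ZMod m).val = m - 1 ∧ 1 = (m - 1) % 2) := by
        rw [ZMod.val_zero]
        omega
      have e2 : ((m - 1 : ℕ) : ZMod m).val = m - 1 ∧ (m - 1) % 2 = (m - 1) % 2 :=
        ⟨hm1val, rfl⟩
      rw [if_neg e1, if_pos e2]
      ring

end CubicFIG
end

section
/- Let Γ = X_a(m,n,S,ℓ), where the parameters satisfy all assumptions of the construction. Then Γ is isomorphic to X_a(m,n,S',ℓ') for some ℓ' ∈ ℤ_n and a signature S' = [{a'_0,b'_0},…,{a'_{m−1},b'_{m−1}}] such that a'_i + b'_i = 0 in ℤ_n for every i ∈ ℤ_m. -/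
namespace CubicFIG

open SimpleGraph

variable {V : Type*}

section Aux

lemma val_add_parity {n : ℕ} [NeZero n] (hn : n % 2 = 0) (x y : ZMod n) :
    (x + y).val % 2 = (x.val + y.val) % 2 := by
  rw [ZMod.val_add]
  exact Nat.mod_mod_of_dvd _ (by omega)

lemma val_neg_parity {n : ℕ} [NeZero n] (hn : n % 2 = 0) (x : ZMod n) :
    (-x).val % 2 = x.val % 2 := by
  have h := val_add_parity hn x (-x)
  simp at h
  omega

lemma val_sub_parity {n : ℕ} [NeZero n] (hn : n % 2 = 0) (x y : ZMod n) :
    ((x - y).val + y.val) % 2 = x.val % 2 := by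
  have h := val_add_parity hn (x - y) y
  rw [sub_add_cancel] at h
  omega

/-- A half of an even element of `ZMod n`, chosen to have even value. -/
def half (n : ℕ) (e : ZMod n) : ZMod n :=
  if (e.val / 2) % 2 = 0 then ((e.val / 2 : ℕ) : ZMod n)
  else ((e.val / 2 + n / 2 : ℕ) : ZMod n)

lemma half_spec {n : ℕ} [NeZero n] (hn : n % 2 = 0) (e : ZMod n) (he : e.val % 2 = 0) :
    2 * half n e = e := by
  have hlt : e.val < n := ZMod.val_lt e
  have hv : ((e.val : ℕ) : ZMod n) = e := by
    simp [ZMod.natCast_val, ZMod.cast_id]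
  unfold half
  split_ifs with h
  · rw [← Nat.cast_ofNat, ← Nat.cast_mul]
    rw [show 2 * (e.val / 2) = e.val by omega]
    exact hv
  · rw [← Nat.cast_ofNat, ← Nat.cast_mul]
    rw [show 2 * (e.val / 2 + n / 2) = e.val + n by omega]
    push_cast
    simp [hv]

lemma half_even {n : ℕ} [NeZero n] (hn : n % 2 = 0) (e : ZMod n) (he : e.val % 2 = 0)
    (h4 : n % 4 = 0 → e.val % 4 = 0) : (half n e).val % 2 = 0 := by
  unfold half
  split_ifs with h
  · rw [ZMod.val_natCast]
    have : e.val / 2 % n % 2 = e.val / 2 % 2 := Nat.mod_mod_of_dvd _ (by omega)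
    omega
  · rw [ZMod.val_natCast]
    have hmm : (e.val / 2 + n / 2) % n % 2 = (e.val / 2 + n / 2) % 2 :=
      Nat.mod_mod_of_dvd _ (by omega)
    have hn4 : n % 4 ≠ 0 := by
      intro hh
      exact h (by have := h4 hh; omega)
    omega

lemma half_zero {n : ℕ} [NeZero n] : half n 0 = 0 := by
  simp [half, ZMod.val_zero]

/-- Cumulative shifts. -/
def cshift (m n : ℕ) (h : ZMod m → ZMod n) (i : ZMod m) : ZMod n :=
  ∑ t ∈ Finset.range (i.val + 1), h ((t : ℕ) : ZMod m)

lemma cshift_zero (m n : ℕ) [NeZero m] (h : ZMod m → ZMod n) (h0 : h 0 = 0) :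
    cshift m n h 0 = 0 := by
  simp [cshift, ZMod.val_zero, h0]

lemma cshift_succ (m n : ℕ) [NeZero m] (hm : 3 ≤ m) (h : ZMod m → ZMod n)
    (i : ZMod m) (hi : i.val ≤ m - 2) :
    cshift m n h (i + 1) = cshift m n h i + h (i + 1) := by
  have hiv : i.val < m := ZMod.val_lt i
  have h1 : (1 : ZMod m).val = 1 := by
    have h' : ((1 : ℕ) : ZMod m).val = 1 % m := ZMod.val_natCast m 1
    rw [Nat.cast_one, Nat.mod_eq_of_lt (by omega)] at h'
    exact h'
  have hv : (i + 1).val = i.val + 1 := by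
    rw [ZMod.val_add, h1, Nat.mod_eq_of_lt (by omega)]
  have hcast : ((i.val + 1 : ℕ) : ZMod m) = i + 1 := by
    push_cast
    simp [ZMod.natCast_val, ZMod.cast_id]
  rw [cshift, cshift, hv, Finset.sum_range_succ, hcast]

lemma cshift_even {m n : ℕ} [NeZero n] (hn : n % 2 = 0) (h : ZMod m → ZMod n)
    (hhe : ∀ t : ZMod m, (h t).val % 2 = 0) (i : ZMod m) :
    (cshift m n h i).val % 2 = 0 := by
  rw [cshift]
  generalize i.val + 1 = N
  induction N with
  | zero => simp
  | succ k ih =>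
    rw [Finset.sum_range_succ, val_add_parity hn]
    have := hhe ((k : ℕ) : ZMod m)
    omega

/-- The vertex map of the normalizing isomorphism. -/
def shiftFun (m n : ℕ) (c h : ZMod m → ZMod n) (p : ZMod m × ZMod n) :
    ZMod m × ZMod n :=
  (p.1, p.2 + if p.2.val % 2 = p.1.val % 2 then c p.1 else c p.1 - h p.1)

lemma shiftFun_inv {m n : ℕ} [NeZero n] (hn : n % 2 = 0) (c h c' h' : ZMod m → ZMod n)
    (hce : ∀ i, (c i).val % 2 = 0) (hhe : ∀ i, (h i).val % 2 = 0)
    (hc' : ∀ i, c' i = -c i) (hh' : ∀ i, h' i = -h i) (p : ZMod m × ZMod n) :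
    shiftFun m n c' h' (shiftFun m n c h p) = p := by
  obtain ⟨i, j⟩ := p
  by_cases hp : j.val % 2 = i.val % 2
  · have hpar : (j + c i).val % 2 = i.val % 2 := by
      rw [val_add_parity hn]; have := hce i; omega
    simp only [shiftFun, hp, if_true, hpar, Prod.mk.injEq, true_and]
    rw [hc']; ring
  · have hsub : (c i - h i).val % 2 = 0 := by
      have := val_sub_parity hn (c i) (h i)
      have := hce i; have := hhe i; omega
    have hpar : ¬ ((j + (c i - h i)).val % 2 = i.val % 2) := by
      rw [val_add_parity hn]; omega
    simp only [shiftFun, hp, if_false, hpar, Prod.mk.injEq, true_and]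
    rw [hc', hh']; ring

lemma map_rel (m n : ℕ) [NeZero m] [NeZero n] (hm : 3 ≤ m) (hn : n % 2 = 0)
    (a b a' b' h c : ZMod m → ZMod n) (ℓ ℓ' : ZMod n)
    (hha : ∀ i, a' i = a i - h i) (hhb : ∀ i, b' i = b i - h i)
    (haodd : ∀ i, (a i).val % 2 = 1) (hbodd : ∀ i, (b i).val % 2 = 1)
    (hce : ∀ i, (c i).val % 2 = 0)
    (hc0 : c 0 = 0) (hh0 : h 0 = 0)
    (hcs : ∀ i : ZMod m, i.val ≤ m - 2 → c (i + 1) = c i + h (i + 1))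
    (hl : ℓ' = ℓ - c ((m - 1 : ℕ) : ZMod m))
    (hlm : ℓ.val % 2 = m % 2)
    (u v : ZMod m × ZMod n)
    (huv : XaCycleRel m n a b u v ∨ XaLinkRel m n ℓ u v) :
    XaCycleRel m n a' b' (shiftFun m n c h u) (shiftFun m n c h v) ∨
      XaLinkRel m n ℓ' (shiftFun m n c h u) (shiftFun m n c h v) := by
  obtain ⟨i, j⟩ := u
  obtain ⟨i', j'⟩ := v
  rcases huv with ⟨hp, h1, h2⟩ | ⟨hp, hile, h1, h2⟩ | ⟨hp, hi, h1, h2⟩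
  · -- cycle edge
    left
    dsimp only at hp h1 h2
    subst h1
    have hpar : (j + c i).val % 2 = i.val % 2 := by
      rw [val_add_parity hn]; have := hce i; omega
    rcases h2 with h2 | h2 <;> subst h2 <;> dsimp only [shiftFun, XaCycleRel]
    · have hvp : ¬ ((j + a i).val % 2 = i.val % 2) := by
        rw [val_add_parity hn]
        have := haodd i; omega
      rw [if_pos hp, if_neg hvp]
      refine ⟨hpar, rfl, Or.inl ?_⟩
      rw [hha]
      ring
    · have hvp : ¬ ((j + b i).val % 2 = i.val % 2) := by
        rw [val_add_parity hn]
        have := hbodd i; omega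
      rw [if_pos hp, if_neg hvp]
      refine ⟨hpar, rfl, Or.inr ?_⟩
      rw [hhb]
      ring
  · -- link edge, type 1
    right
    dsimp only at hp hile h1 h2
    subst h1; subst h2
    have hiv : i.val < m := ZMod.val_lt i
    have hv1 : (1 : ZMod m).val = 1 := by
      have h' : ((1 : ℕ) : ZMod m).val = 1 % m := ZMod.val_natCast m 1
      rw [Nat.cast_one, Nat.mod_eq_of_lt (by omega)] at h'
      exact h'
    have hvsucc : (i + 1).val = i.val + 1 := by
      rw [ZMod.val_add, hv1, Nat.mod_eq_of_lt (by omega)]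
    have hvp : ¬ (j'.val % 2 = (i + 1).val % 2) := by
      rw [hvsucc]; omega
    have hpar : (j' + c i).val % 2 = i.val % 2 := by
      rw [val_add_parity hn]; have := hce i; omega
    dsimp only [shiftFun, XaLinkRel]
    rw [if_pos hp, if_neg hvp]
    exact Or.inl ⟨hpar, hile, rfl, by rw [hcs i hile]; ring⟩
  · -- link edge, type 2
    right
    dsimp only at hp hi h1 h2
    subst h1; subst h2; subst hi
    have hmv : ((m - 1 : ℕ) : ZMod m).val = m - 1 := by
      rw [ZMod.val_natCast, Nat.mod_eq_of_lt (by omega)]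
    have hup : j.val % 2 = ((m - 1 : ℕ) : ZMod m).val % 2 := by
      rw [hmv]; omega
    have hvp : ¬ ((j + ℓ).val % 2 = (0 : ZMod m).val % 2) := by
      rw [val_add_parity hn, ZMod.val_zero]
      rw [hmv] at hup
      omega
    have hpar : (j + c ((m - 1 : ℕ) : ZMod m)).val % 2 = (m - 1) % 2 := by
      rw [val_add_parity hn]
      rw [hmv] at hup
      have := hce ((m - 1 : ℕ) : ZMod m); omega
    dsimp only [shiftFun, XaLinkRel]
    rw [if_pos hup, if_neg hvp]
    refine Or.inr ⟨hpar, rfl, rfl, ?_⟩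
    rw [hl, hc0, hh0]
    ring

end Aux

/-- normalizing the signature so that `a'_i + b'_i = 0`. -/
theorem statement4 (m n : ℕ) (a b : ZMod m → ZMod n) (ℓ : ZMod n)
    (hadm : Admissible m n a b ℓ) :
    ∃ (a' b' : ZMod m → ZMod n) (ℓ' : ZMod n),
      Admissible m n a' b' ℓ' ∧ (∀ i : ZMod m, a' i + b' i = 0) ∧
      Nonempty (XaGraph m n a b ℓ ≃g XaGraph m n a' b' ℓ') := by
  obtain ⟨hm, hn4, hn2, hlm, ha0, hb0, hsig⟩ := hadm
  haveI : NeZero m := ⟨by omega⟩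
  haveI : NeZero n := ⟨by omega⟩
  have haodd : ∀ i, (a i).val % 2 = 1 := fun i => (hsig i).2.1
  have hbodd : ∀ i, (b i).val % 2 = 1 := fun i => (hsig i).2.2.1
  -- the sum a i + b i is even
  have hsum_even : ∀ i, (a i + b i).val % 2 = 0 := by
    intro i
    rw [val_add_parity hn2]
    have := haodd i; have := hbodd i; omega
  -- if 4 ∣ n then the sum is divisible by 4
  have hsum4 : ∀ i, n % 4 = 0 → (a i + b i).val % 4 = 0 := by
    intro i hn4'
    have hgcd := (hsig i).2.2.2
    have h2D : 2 ∣ (b i - a i).val := by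
      have := Nat.gcd_dvd_left (b i - a i).val n
      rw [hgcd] at this
      exact this
    have h4D : ¬ (4 ∣ (b i - a i).val) := by
      intro hd
      have : (4 : ℕ) ∣ Nat.gcd (b i - a i).val n := Nat.dvd_gcd hd (by omega)
      rw [hgcd] at this
      omega
    have key : a i + b i = (b i - a i) + (a i + a i) := by ring
    have v1 : (a i + b i).val = ((b i - a i).val + (a i + a i).val) % n := by
      rw [key, ZMod.val_add]
    have v2 : (a i + a i).val = ((a i).val + (a i).val) % n := ZMod.val_add _ _
    have e1 : ((b i - a i).val + (a i + a i).val) % n % 4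
        = ((b i - a i).val + (a i + a i).val) % 4 := Nat.mod_mod_of_dvd _ (by omega)
    have e2 : ((a i).val + (a i).val) % n % 4 = ((a i).val + (a i).val) % 4 :=
      Nat.mod_mod_of_dvd _ (by omega)
    have := haodd i
    omega
  set h : ZMod m → ZMod n := fun i => half n (a i + b i) with hhdef
  have hh2 : ∀ i, 2 * h i = a i + b i := fun i => half_spec hn2 _ (hsum_even i)
  have hhe : ∀ i, (h i).val % 2 = 0 := fun i => half_even hn2 _ (hsum_even i) (hsum4 i)
  have hh0 : h 0 = 0 := by
    show half n (a 0 + b 0) = 0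
    rw [ha0, hb0, show (1 : ZMod n) + (-1) = 0 by ring]
    exact half_zero
  set c : ZMod m → ZMod n := cshift m n h with hcdef
  have hce : ∀ i, (c i).val % 2 = 0 := cshift_even hn2 h hhe
  have hc0 : c 0 = 0 := cshift_zero m n h hh0
  have hcs : ∀ i : ZMod m, i.val ≤ m - 2 → c (i + 1) = c i + h (i + 1) :=
    fun i hi => cshift_succ m n hm h i hi
  refine ⟨fun i => a i - h i, fun i => b i - h i, ℓ - c ((m - 1 : ℕ) : ZMod m),
    ?_, ?_, ?_⟩
  · -- admissibility of the new parameters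
    refine ⟨hm, hn4, hn2, ?_, ?_, ?_, ?_⟩
    · have h1 := val_sub_parity hn2 ℓ (c ((m - 1 : ℕ) : ZMod m))
      have h2 := hce ((m - 1 : ℕ) : ZMod m)
      omega
    · show a 0 - h 0 = 1
      rw [ha0, hh0]; ring
    · show b 0 - h 0 = -1
      rw [hb0, hh0]; ring
    · intro i
      refine ⟨?_, ?_, ?_, ?_⟩
      · show a i - h i ≠ b i - h i
        intro heq
        exact (hsig i).1 (by rwa [sub_left_inj] at heq)
      · show (a i - h i).val % 2 = 1
        have h1 := val_sub_parity hn2 (a i) (h i)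
        have := haodd i; have := hhe i; omega
      · show (b i - h i).val % 2 = 1
        have h1 := val_sub_parity hn2 (b i) (h i)
        have := hbodd i; have := hhe i; omega
      · show Nat.gcd (b i - h i - (a i - h i)).val n = 2
        rw [show b i - h i - (a i - h i) = b i - a i by ring]
        exact (hsig i).2.2.2
  · -- the new signature sums to zero
    intro i
    show (a i - h i) + (b i - h i) = 0
    have := hh2 i
    linear_combination -this
  · -- the graph isomorphism
    have ha'odd : ∀ i, ((fun i => a i - h i) i).val % 2 = 1 := by
      intro i
      show (a i - h i).val % 2 = 1
      have h1 := val_sub_parity hn2 (a i) (h i)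
      have := haodd i; have := hhe i
      omega
    have hb'odd : ∀ i, ((fun i => b i - h i) i).val % 2 = 1 := by
      intro i
      show (b i - h i).val % 2 = 1
      have h1 := val_sub_parity hn2 (b i) (h i)
      have := hbodd i; have := hhe i
      omega
    have hnce : ∀ i, ((-c i : ZMod n)).val % 2 = 0 := by
      intro i
      rw [val_neg_parity hn2]
      exact hce i
    have hlm' : (ℓ - c ((m - 1 : ℕ) : ZMod m)).val % 2 = m % 2 := by
      have h1 := val_sub_parity hn2 ℓ (c ((m - 1 : ℕ) : ZMod m))
      have h2 := hce ((m - 1 : ℕ) : ZMod m)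
      omega
    have linv : ∀ p, shiftFun m n (fun i => -c i) (fun i => -h i)
        (shiftFun m n c h p) = p :=
      shiftFun_inv hn2 c h _ _ hce hhe (fun i => rfl) (fun i => rfl)
    have rinv : ∀ p, shiftFun m n c h
        (shiftFun m n (fun i => -c i) (fun i => -h i) p) = p := by
      intro p
      refine shiftFun_inv hn2 (fun i => -c i) (fun i => -h i) c h hnce
        (fun i => by rw [val_neg_parity hn2]; exact hhe i)
        (fun i => by simp) (fun i => by simp) p
    have key1 := map_rel m n hm hn2 a b _ _ h c ℓ (ℓ - c ((m - 1 : ℕ) : ZMod m))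
      (fun i => rfl) (fun i => rfl) haodd hbodd hce hc0 hh0 hcs rfl hlm
    have key2 := map_rel m n hm hn2 (fun i => a i - h i) (fun i => b i - h i) a b
      (fun i => -h i) (fun i => -c i) (ℓ - c ((m - 1 : ℕ) : ZMod m)) ℓ
      (fun i => show a i = (a i - h i) - (-h i) by ring)
      (fun i => show b i = (b i - h i) - (-h i) by ring)
      ha'odd hb'odd hnce (show -c 0 = 0 by rw [hc0]; ring) (show -h 0 = 0 by rw [hh0]; ring)
      (fun i hi => show -c (i + 1) = -c i + -(h (i + 1)) by rw [hcs i hi]; ring)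
      (show ℓ = (ℓ - c ((m - 1 : ℕ) : ZMod m)) - (-c ((m - 1 : ℕ) : ZMod m)) by ring) hlm'
    refine ⟨⟨⟨shiftFun m n c h, shiftFun m n (fun i => -c i) (fun i => -h i),
      linv, rinv⟩, ?_⟩⟩
    intro u v
    simp only [Equiv.coe_fn_mk, XaGraph, SimpleGraph.fromRel_adj]
    constructor
    · rintro ⟨hne, hrel⟩
      refine ⟨fun heq => hne (by rw [heq]), ?_⟩
      rcases hrel with hr | hr
      · have := key2 _ _ hr
        rw [linv u, linv v] at this
        exact Or.inl this
      · have := key2 _ _ hr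
        rw [linv u, linv v] at this
        exact Or.inr this
    · rintro ⟨hne, hrel⟩
      refine ⟨?_, ?_⟩
      · intro heq
        exact hne (by rw [← linv u, ← linv v, heq])
      · rcases hrel with hr | hr
        · exact Or.inl (key1 u v hr)
        · exact Or.inr (key1 v u hr)

end CubicFIG
end

section
/- Let Γ = X_a(m,n,S,ℓ) satisfy Assumption A. Then there exists a nontrivial automorphism of Γ preserving the 2-factor C and fixing the vertex v_{0,0} if and only if 2ℓ = 0 in ℤ_n. -/
namespace CubicFIG

open SimpleGraph

variable {V : Type*}

section Statement5Aux

variable {m n : ℕ} {k : ZMod m → ZMod n} {ℓ : ZMod n}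

private lemma aux_val_add (hn2 : n % 2 = 0) [NeZero n] (x y : ZMod n) :
    (x + y).val % 2 = (x.val + y.val) % 2 := by
  rw [ZMod.val_add]
  exact Nat.mod_mod_of_dvd _ (Nat.dvd_of_mod_eq_zero hn2)

private lemma aux_val_neg (hn2 : n % 2 = 0) [NeZero n] (x : ZMod n) :
    (-x).val % 2 = x.val % 2 := by
  rcases eq_or_ne x 0 with rfl | hx
  · simp
  · have h1 : x.val < n := ZMod.val_lt x
    have h2 : x.val ≠ 0 := fun h => hx ((ZMod.val_eq_zero x).1 h)
    rw [ZMod.neg_val, if_neg hx]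
    omega

private lemma aux_kodd (hk : ∀ i : ZMod m, Nat.Coprime (k i).val n) (hn2 : n % 2 = 0)
    (hn : 6 ≤ n) (i : ZMod m) : (k i).val % 2 = 1 := by
  by_contra h
  have h2 : (2 : ℕ) ∣ Nat.gcd (k i).val n :=
    Nat.dvd_gcd (Nat.dvd_of_mod_eq_zero (by omega)) (Nat.dvd_of_mod_eq_zero hn2)
  rw [hk i] at h2
  omega

private lemma aux_kunit (hk : ∀ i : ZMod m, Nat.Coprime (k i).val n) (hn : 6 ≤ n)
    (i : ZMod m) : IsUnit (k i) := by
  haveI : NeZero n := ⟨by omega⟩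
  have := (ZMod.isUnit_iff_coprime (k i).val n).2 (hk i)
  rwa [ZMod.natCast_zmod_val] at this

private lemma aux_cknz (hk : ∀ i : ZMod m, Nat.Coprime (k i).val n) (hn : 6 ≤ n)
    (i : ZMod m) (c : ℕ) (hc : 0 < c) (hcn : c < n) : (c : ZMod n) * k i ≠ 0 := by
  haveI : NeZero n := ⟨by omega⟩
  intro h
  have h0 : ((c : ZMod n)) * k i = 0 * k i := by rw [h, zero_mul]
  have h1 : (c : ZMod n) = 0 := (aux_kunit hk hn i).mul_right_cancel h0
  rw [ZMod.natCast_eq_zero_iff] at h1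
  have := Nat.le_of_dvd hc h1
  omega

private lemma aux_knz (hk : ∀ i : ZMod m, Nat.Coprime (k i).val n) (hn : 6 ≤ n)
    (i : ZMod m) : k i ≠ 0 := by
  intro h
  have := hk i
  rw [h, ZMod.val_zero, Nat.coprime_zero_left] at this
  omega

/-- Characterization of adjacency in the 2-factor. -/
private lemma aux_Hadj (hn : 6 ≤ n) (hn2 : n % 2 = 0)
    (hk : ∀ i : ZMod m, Nat.Coprime (k i).val n) (p q : ZMod m × ZMod n) :
    (XaFactor m n k (fun i => -(k i))).Adj p q ↔
      q.1 = p.1 ∧ (q.2 = p.2 + k p.1 ∨ q.2 = p.2 - k p.1) := by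
  haveI : NeZero n := ⟨by omega⟩
  rw [XaFactor, SimpleGraph.fromRel_adj]
  constructor
  · rintro ⟨hne, h | h⟩
    · obtain ⟨hp, h1, h2⟩ := h
      refine ⟨h1.symm, ?_⟩
      rcases h2 with h2 | h2
      · exact Or.inl h2
      · right; rw [h2]; ring
    · obtain ⟨hp, h1, h2⟩ := h
      refine ⟨h1, ?_⟩
      rw [h1] at h2
      rcases h2 with h2 | h2
      · right; rw [h2]; ring
      · left; rw [h2]; ring
  · rintro ⟨h1, h2⟩
    have hknz := aux_knz hk hn p.1
    have hkodd := aux_kodd hk hn2 hn p.1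
    have hq2 : q.2.val % 2 ≠ p.2.val % 2 := by
      rcases h2 with h2 | h2
      · rw [h2, aux_val_add hn2]; omega
      · rw [h2, sub_eq_add_neg, aux_val_add hn2]
        have := aux_val_neg hn2 (k p.1)
        omega
    have hne : p ≠ q := by
      intro h; subst h
      rcases h2 with h2 | h2
      · exact hknz (by linear_combination -h2)
      · exact hknz (by linear_combination h2)
    refine ⟨hne, ?_⟩
    by_cases hp : p.2.val % 2 = p.1.val % 2
    · refine Or.inl ⟨hp, h1.symm, ?_⟩
      rcases h2 with h2 | h2
      · exact Or.inl h2
      · right; rw [h2]; ring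
    · refine Or.inr ⟨?_, h1, ?_⟩
      · rw [h1]; omega
      · rw [h1]
        rcases h2 with h2 | h2
        · right; rw [h2]; ring
        · left; rw [h2]; ring

/-- The unique non-factor (link) neighbor, middle rows. -/
private lemma aux_linkUnique_mid (hm : 3 ≤ m) (hn : 6 ≤ n) (hn2 : n % 2 = 0)
    (hlm : ℓ.val % 2 = m % 2) (hk : ∀ i : ZMod m, Nat.Coprime (k i).val n)
    (i : ZMod m) (x : ZMod n) (hi : i.val ≤ m - 2) (hpar : x.val % 2 = i.val % 2)
    (w : ZMod m × ZMod n)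
    (hadj : (XaGraph m n k (fun i => -(k i)) ℓ).Adj (i, x) w)
    (hnH : ¬ (XaFactor m n k (fun i => -(k i))).Adj (i, x) w) :
    w = (i + 1, x) := by
  haveI : NeZero n := ⟨by omega⟩
  haveI : NeZero m := ⟨by omega⟩
  haveI : Fact (1 < m) := ⟨by omega⟩
  rw [XaGraph, SimpleGraph.fromRel_adj] at hadj
  obtain ⟨hne, hrel⟩ := hadj
  rcases hrel with (hc | hl) | (hc | hl)
  · exact absurd ((SimpleGraph.fromRel_adj _ _ _).2 ⟨hne, Or.inl hc⟩) hnH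
  · rcases hl with ⟨_, _, h3, h4⟩ | ⟨_, h2, _, _⟩
    · exact Prod.ext h3 h4
    · exfalso
      have : (i, x).1.val = (m - 1) % m := by rw [h2]; exact ZMod.val_natCast _ _
      rw [Nat.mod_eq_of_lt (by omega)] at this
      simp only at this
      omega
  · exact absurd ((SimpleGraph.fromRel_adj _ _ _).2 ⟨hne, Or.inr hc⟩) hnH
  · exfalso
    rcases hl with ⟨hp1, hw1, h3, h4⟩ | ⟨hp1, hw1, h3, h4⟩
    · simp only at h3 h4 hp1
      have hval : i.val = w.1.val + 1 := by
        rw [h3, ZMod.val_add_of_lt]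
        · rw [ZMod.val_one]
        · rw [ZMod.val_one]; omega
      rw [h4] at hpar
      omega
    · simp only at h3 h4 hp1
      have hi0 : i.val = 0 := by rw [h3]; exact ZMod.val_zero
      have hx : x.val % 2 = 0 := by omega
      rw [h4, aux_val_add hn2] at hx
      have hlpar := aux_val_neg hn2 ℓ
      rw [show w.2 = x + -ℓ by rw [h4]; ring, aux_val_add hn2] at hp1
      omega

/-- The unique non-factor (link) neighbor, top row. -/
private lemma aux_linkUnique_top (hm : 3 ≤ m) (hn : 6 ≤ n) (hn2 : n % 2 = 0)
    (hlm : ℓ.val % 2 = m % 2) (hk : ∀ i : ZMod m, Nat.Coprime (k i).val n)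
    (x : ZMod n) (hpar : x.val % 2 = (m - 1) % 2) (w : ZMod m × ZMod n)
    (hadj : (XaGraph m n k (fun i => -(k i)) ℓ).Adj (((m - 1 : ℕ) : ZMod m), x) w)
    (hnH : ¬ (XaFactor m n k (fun i => -(k i))).Adj (((m - 1 : ℕ) : ZMod m), x) w) :
    w = (0, x + ℓ) := by
  haveI : NeZero n := ⟨by omega⟩
  haveI : NeZero m := ⟨by omega⟩
  haveI : Fact (1 < m) := ⟨by omega⟩
  have hval : (((m - 1 : ℕ) : ZMod m)).val = m - 1 := by
    rw [ZMod.val_natCast, Nat.mod_eq_of_lt (by omega)]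
  rw [XaGraph, SimpleGraph.fromRel_adj] at hadj
  obtain ⟨hne, hrel⟩ := hadj
  rcases hrel with (hc | hl) | (hc | hl)
  · exact absurd ((SimpleGraph.fromRel_adj _ _ _).2 ⟨hne, Or.inl hc⟩) hnH
  · rcases hl with ⟨_, h2, _, _⟩ | ⟨_, _, h3, h4⟩
    · exfalso; simp only at h2; rw [hval] at h2; omega
    · exact Prod.ext h3 h4
  · exact absurd ((SimpleGraph.fromRel_adj _ _ _).2 ⟨hne, Or.inr hc⟩) hnH
  · exfalso
    rcases hl with ⟨hp1, hw1, h3, h4⟩ | ⟨hp1, hw1, h3, h4⟩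
    · simp only at h3 h4 hp1
      have hval2 : (((m - 1 : ℕ) : ZMod m)).val = w.1.val + 1 := by
        rw [h3, ZMod.val_add_of_lt]
        · rw [ZMod.val_one]
        · rw [ZMod.val_one]; omega
      rw [hval] at hval2
      rw [h4] at hpar
      omega
    · simp only at h3
      have : (((m - 1 : ℕ) : ZMod m)).val = (0 : ZMod m).val := by rw [h3]
      rw [hval, ZMod.val_zero] at this
      omega

/-- Link adjacency, middle rows. -/
private lemma aux_adj_link_mid (hm : 3 ≤ m) (hn : 6 ≤ n)
    (i : ZMod m) (x : ZMod n) (hi : i.val ≤ m - 2) (hpar : x.val % 2 = i.val % 2) :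
    (XaGraph m n k (fun i => -(k i)) ℓ).Adj (i, x) (i + 1, x) := by
  haveI : Fact (1 < m) := ⟨by omega⟩
  rw [XaGraph, SimpleGraph.fromRel_adj]
  refine ⟨?_, Or.inl (Or.inr (Or.inl ⟨hpar, hi, rfl, rfl⟩))⟩
  intro h
  have : i = i + 1 := congrArg Prod.fst h
  have h1 : (0 : ZMod m) = 1 := by linear_combination this
  exact one_ne_zero h1.symm

/-- Link adjacency, top row. -/
private lemma aux_adj_link_top (hm : 3 ≤ m) (hn : 6 ≤ n)
    (x : ZMod n) (hpar : x.val % 2 = (m - 1) % 2) :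
    (XaGraph m n k (fun i => -(k i)) ℓ).Adj (((m - 1 : ℕ) : ZMod m), x) (0, x + ℓ) := by
  haveI : NeZero m := ⟨by omega⟩
  rw [XaGraph, SimpleGraph.fromRel_adj]
  refine ⟨?_, Or.inl (Or.inr (Or.inr ⟨hpar, rfl, rfl, rfl⟩))⟩
  intro h
  have h0 : ((m - 1 : ℕ) : ZMod m) = 0 := congrArg Prod.fst h
  have h1 : (((m - 1 : ℕ) : ZMod m)).val = (0 : ZMod m).val := by rw [h0]
  rw [ZMod.val_natCast, Nat.mod_eq_of_lt (by omega), ZMod.val_zero] at h1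
  omega

/-- Key lemma: an automorphism preserving the 2-factor which fixes `v_{0,0}` and sends
`v_{0,1}` to `v_{0,e}` (`e = ±1`) acts as `v_{i,j} ↦ v_{i,e·j}`. -/
private lemma aux_key (hm : 3 ≤ m) (hn : 6 ≤ n) (hn2 : n % 2 = 0)
    (hlm : ℓ.val % 2 = m % 2) (hk0 : k 0 = 1)
    (hk : ∀ i : ZMod m, Nat.Coprime (k i).val n)
    (f : Equiv.Perm (ZMod m × ZMod n))
    (hfA : IsAut (XaGraph m n k (fun i => -(k i)) ℓ) f)
    (hfP : Preserves (XaFactor m n k (fun i => -(k i))) f)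
    (e : ZMod n) (he : e = 1 ∨ e = -1)
    (h0 : f (0, 0) = (0, 0)) (h1 : f (0, 1) = (0, e)) :
    ∀ (i : ZMod m) (j : ZMod n), f (i, j) = (i, e * j) := by
  haveI : NeZero n := ⟨by omega⟩
  haveI : NeZero m := ⟨by omega⟩
  haveI : Fact (1 < m) := ⟨by omega⟩
  have he2 : e * e = 1 := by rcases he with rfl | rfl <;> ring
  have epar : ∀ x : ZMod n, (e * x).val % 2 = x.val % 2 := by
    rcases he with rfl | rfl
    · intro x; rw [one_mul]
    · intro x; rw [neg_one_mul]; exact aux_val_neg hn2 x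
  have h2K : ∀ i : ZMod m, (2 : ZMod n) * k i ≠ 0 := by
    intro i
    have := aux_cknz hk hn i 2 (by omega) (by omega)
    simpa using this
  have h4K : ∀ i : ZMod m, (4 : ZMod n) * k i ≠ 0 := by
    intro i
    have := aux_cknz hk hn i 4 (by omega) (by omega)
    simpa using this
  -- propagation along a cycle from two consecutive known values
  have prop : ∀ (i : ZMod m) (x : ZMod n),
      f (i, x) = (i, e * x) → f (i, x + k i) = (i, e * (x + k i)) →
      ∀ j : ZMod n, f (i, j) = (i, e * j) := by
    intro i x hx hxk
    have bstep : ∀ t : ℕ,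
        f (i, x + (t : ZMod n) * k i) = (i, e * (x + (t : ZMod n) * k i)) ∧
        f (i, x + ((t : ZMod n) + 1) * k i) = (i, e * (x + ((t : ZMod n) + 1) * k i)) := by
      intro t
      induction t with
      | zero =>
        constructor
        · simpa using hx
        · simpa using hxk
      | succ t ih =>
        have hcast : ((t + 1 : ℕ) : ZMod n) = (t : ZMod n) + 1 := by push_cast; ring
        rw [hcast]
        refine ⟨ih.2, ?_⟩
        have hadj : (XaFactor m n k (fun i => -(k i))).Adj
            (i, x + ((t : ZMod n) + 1) * k i) (i, x + ((t : ZMod n) + 1 + 1) * k i) := by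
          rw [aux_Hadj hn hn2 hk]
          exact ⟨rfl, Or.inl (by ring)⟩
        have himg := hfP _ _ hadj
        rw [ih.2, aux_Hadj hn hn2 hk] at himg
        obtain ⟨hw1, hw2⟩ := himg
        rcases hw2 with hw2 | hw2
        · rcases he with rfl | rfl
          · exact Prod.ext hw1 (by rw [hw2]; ring)
          · exfalso
            have hfull : f (i, x + ((t : ZMod n) + 1 + 1) * k i)
                = f (i, x + (t : ZMod n) * k i) := by
              rw [ih.1]
              exact Prod.ext hw1 (by rw [hw2]; ring)
            have hsnd : x + ((t : ZMod n) + 1 + 1) * k i = x + (t : ZMod n) * k i :=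
              congrArg Prod.snd (f.injective hfull)
            exact h2K i (by linear_combination hsnd)
        · rcases he with rfl | rfl
          · exfalso
            have hfull : f (i, x + ((t : ZMod n) + 1 + 1) * k i)
                = f (i, x + (t : ZMod n) * k i) := by
              rw [ih.1]
              exact Prod.ext hw1 (by rw [hw2]; ring)
            have hsnd : x + ((t : ZMod n) + 1 + 1) * k i = x + (t : ZMod n) * k i :=
              congrArg Prod.snd (f.injective hfull)
            exact h2K i (by linear_combination hsnd)
          · exact Prod.ext hw1 (by rw [hw2]; ring)
    intro j
    have hcover : x + ((((j - x) * (k i)⁻¹).val : ℕ) : ZMod n) * k i = j := by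
      rw [ZMod.natCast_zmod_val, mul_assoc, ZMod.inv_mul_of_unit _ (aux_kunit hk hn i)]
      ring
    have := (bstep (((j - x) * (k i)⁻¹).val)).1
    rwa [hcover] at this
  -- interpolation: a vertex sandwiched between two known ones
  have sand : ∀ (i : ZMod m) (y : ZMod n),
      f (i, y) = (i, e * y) → f (i, y + 2 * k i) = (i, e * (y + 2 * k i)) →
      f (i, y + k i) = (i, e * (y + k i)) := by
    intro i y hy hy2
    have hadj1 : (XaFactor m n k (fun i => -(k i))).Adj (i, y) (i, y + k i) := by
      rw [aux_Hadj hn hn2 hk]; exact ⟨rfl, Or.inl rfl⟩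
    have hadj2 : (XaFactor m n k (fun i => -(k i))).Adj (i, y + 2 * k i) (i, y + k i) := by
      rw [aux_Hadj hn hn2 hk]; exact ⟨rfl, Or.inr (by ring)⟩
    have h1' := hfP _ _ hadj1
    rw [hy, aux_Hadj hn hn2 hk] at h1'
    have h2' := hfP _ _ hadj2
    rw [hy2, aux_Hadj hn hn2 hk] at h2'
    obtain ⟨hw1, hc1⟩ := h1'
    obtain ⟨-, hc2⟩ := h2'
    rcases he with rfl | rfl
    · rcases hc1 with hc1 | hc1
      · exact Prod.ext hw1 (by rw [hc1]; ring)
      · exfalso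
        rcases hc2 with hc2 | hc2
        · exact h4K i (by linear_combination hc1 - hc2)
        · exact h2K i (by linear_combination hc1 - hc2)
    · rcases hc1 with hc1 | hc1
      · exfalso
        rcases hc2 with hc2 | hc2
        · exact h2K i (by linear_combination hc2 - hc1)
        · exact h4K i (by linear_combination hc2 - hc1)
      · exact Prod.ext hw1 (by rw [hc1]; ring)
  -- induction over the rows
  have rows : ∀ i : ℕ, i ≤ m - 1 → ∀ j : ZMod n,
      f ((i : ZMod m), j) = ((i : ZMod m), e * j) := by
    intro i
    induction i with
    | zero =>
      intro _ j
      have hx : f ((0 : ZMod m), (0 : ZMod n)) = ((0 : ZMod m), e * 0) := by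
        rw [mul_zero]; exact h0
      have hxk : f ((0 : ZMod m), (0 : ZMod n) + k 0) = ((0 : ZMod m), e * (0 + k 0)) := by
        rw [hk0, zero_add, mul_one]; exact h1
      have := prop 0 0 hx hxk j
      simpa using this
    | succ i ih =>
      intro hi j
      have hii : i ≤ m - 2 := by omega
      have ihr := ih (by omega)
      have hival : ((i : ZMod m)).val = i := by
        rw [ZMod.val_natCast, Nat.mod_eq_of_lt (by omega)]
      have linkstep : ∀ y : ZMod n, y.val % 2 = i % 2 →
          f ((i : ZMod m) + 1, y) = ((i : ZMod m) + 1, e * y) := by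
        intro y hy
        have hadjG : (XaGraph m n k (fun i => -(k i)) ℓ).Adj
            ((i : ZMod m), y) ((i : ZMod m) + 1, y) :=
          aux_adj_link_mid hm hn _ _ (by rw [hival]; exact hii) (by rw [hival]; exact hy)
        have himg := (hfA _ _).2 hadjG
        rw [ihr y] at himg
        have hnH : ¬ (XaFactor m n k (fun i => -(k i))).Adj
            ((i : ZMod m), e * y) (f ((i : ZMod m) + 1, y)) := by
          intro hH
          rw [aux_Hadj hn hn2 hk] at hH
          obtain ⟨hw1, hw2⟩ := hH
          rcases hw2 with hw2 | hw2
          · have hfull : f ((i : ZMod m) + 1, y)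
                = f ((i : ZMod m), y + e * k ((i : ℕ) : ZMod m)) := by
              rw [ihr]
              exact Prod.ext hw1
                (by rw [hw2]; linear_combination (-(k ((i : ℕ) : ZMod m))) * he2)
            have hfst : (i : ZMod m) + 1 = (i : ZMod m) :=
              congrArg Prod.fst (f.injective hfull)
            have h10 : (1 : ZMod m) = 0 := by linear_combination hfst
            exact one_ne_zero h10
          · have hfull : f ((i : ZMod m) + 1, y)
                = f ((i : ZMod m), y - e * k ((i : ℕ) : ZMod m)) := by
              rw [ihr]
              exact Prod.ext hw1
                (by rw [hw2]; linear_combination (k ((i : ℕ) : ZMod m)) * he2)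
            have hfst : (i : ZMod m) + 1 = (i : ZMod m) :=
              congrArg Prod.fst (f.injective hfull)
            have h10 : (1 : ZMod m) = 0 := by linear_combination hfst
            exact one_ne_zero h10
        exact aux_linkUnique_mid hm hn hn2 hlm hk ((i : ℕ) : ZMod m) (e * y)
          (by rw [hival]; exact hii) (by rw [hival, epar]; exact hy) _ himg hnH
      have hcast : ((i + 1 : ℕ) : ZMod m) = (i : ZMod m) + 1 := by push_cast; ring
      have hj0 : (((i : ℕ) : ZMod n)).val % 2 = i % 2 := by
        rw [ZMod.val_natCast]
        exact Nat.mod_mod_of_dvd _ (Nat.dvd_of_mod_eq_zero hn2)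
      have a0 := linkstep ((i : ℕ) : ZMod n) hj0
      have a2 : f ((i : ZMod m) + 1, ((i : ℕ) : ZMod n) + 2 * k ((i : ZMod m) + 1))
          = ((i : ZMod m) + 1, e * (((i : ℕ) : ZMod n) + 2 * k ((i : ZMod m) + 1))) := by
        apply linkstep
        have hKv := aux_kodd hk hn2 hn ((i : ZMod m) + 1)
        have h2k : (2 * k ((i : ZMod m) + 1)).val % 2 = 0 := by
          rw [two_mul, aux_val_add hn2]; omega
        rw [aux_val_add hn2]; omega
      have a1 := sand ((i : ZMod m) + 1) ((i : ℕ) : ZMod n) a0 a2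
      rw [hcast]
      exact prop ((i : ZMod m) + 1) ((i : ℕ) : ZMod n) a0 a1 j
  intro i j
  have hiv : i.val ≤ m - 1 := by have := ZMod.val_lt i; omega
  have := rows i.val hiv j
  rwa [ZMod.natCast_zmod_val] at this

end Statement5Aux

/-- a nontrivial automorphism preserving `C` fixes `v_{0,0}` iff `2ℓ = 0`. -/
theorem statement5 (m n : ℕ) (k : ZMod m → ZMod n) (ℓ : ZMod n)
    (hA : AssumptionA m n k ℓ) :
    (∃ f : Equiv.Perm (ZMod m × ZMod n),
        IsAut (XaGraph m n k (fun i => -(k i)) ℓ) f ∧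
        Preserves (XaFactor m n k (fun i => -(k i))) f ∧
        f ≠ 1 ∧ f (0, 0) = (0, 0)) ↔ 2 * ℓ = 0 := by
  obtain ⟨hm, hn, hn2, hlm, hk0, hk, -⟩ := hA
  haveI : NeZero n := ⟨by omega⟩
  haveI : NeZero m := ⟨by omega⟩
  constructor
  · rintro ⟨f, hfA, hfP, hf1, hf0⟩
    have hadj : (XaFactor m n k (fun i => -(k i))).Adj ((0 : ZMod m), (0 : ZMod n)) (0, 1) := by
      rw [aux_Hadj hn hn2 hk]
      exact ⟨rfl, Or.inl (by rw [hk0]; ring)⟩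
    have himg := hfP _ _ hadj
    rw [hf0, aux_Hadj hn hn2 hk] at himg
    obtain ⟨hw1, hw2⟩ := himg
    have hf01 : f (0, 1) = ((0 : ZMod m), (1 : ZMod n)) ∨ f (0, 1) = (0, -1) := by
      rcases hw2 with hw2 | hw2
      · left; exact Prod.ext hw1 (by rw [hw2, hk0]; ring)
      · right; exact Prod.ext hw1 (by rw [hw2, hk0]; ring)
    rcases hf01 with hf01 | hf01
    · exfalso
      apply hf1
      apply Equiv.ext
      intro p
      have := aux_key hm hn hn2 hlm hk0 hk f hfA hfP 1 (Or.inl rfl) hf0 hf01 p.1 p.2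
      rw [one_mul] at this
      simpa using this
    · have hfull := aux_key hm hn hn2 hlm hk0 hk f hfA hfP (-1) (Or.inr rfl) hf0 hf01
      have hj0par : (((m - 1 : ℕ) : ZMod n)).val % 2 = (m - 1) % 2 := by
        rw [ZMod.val_natCast]
        exact Nat.mod_mod_of_dvd _ (Nat.dvd_of_mod_eq_zero hn2)
      have hadjG := aux_adj_link_top (k := k) (ℓ := ℓ) hm hn ((m - 1 : ℕ) : ZMod n) hj0par
      have himg2 := (hfA _ _).2 hadjG
      rw [hfull, hfull] at himg2
      have hnH : ¬ (XaFactor m n k (fun i => -(k i))).Adj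
          (((m - 1 : ℕ) : ZMod m), -1 * ((m - 1 : ℕ) : ZMod n))
          ((0 : ZMod m), -1 * (((m - 1 : ℕ) : ZMod n) + ℓ)) := by
        intro hH
        rw [aux_Hadj hn hn2 hk] at hH
        have hfst : (0 : ZMod m) = ((m - 1 : ℕ) : ZMod m) := hH.1
        have h01 : (0 : ZMod m).val = (((m - 1 : ℕ) : ZMod m)).val := by rw [hfst]
        rw [ZMod.val_zero, ZMod.val_natCast, Nat.mod_eq_of_lt (by omega)] at h01
        omega
      have hpx : ((-1 : ZMod n) * ((m - 1 : ℕ) : ZMod n)).val % 2 = (m - 1) % 2 := by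
        rw [neg_one_mul, aux_val_neg hn2]
        exact hj0par
      have hfin := aux_linkUnique_top hm hn hn2 hlm hk (-1 * ((m - 1 : ℕ) : ZMod n)) hpx
        _ himg2 hnH
      have hsnd : -1 * (((m - 1 : ℕ) : ZMod n) + ℓ) = -1 * ((m - 1 : ℕ) : ZMod n) + ℓ :=
        congrArg Prod.snd hfin
      linear_combination -hsnd
  · intro h2l
    have hneg : -ℓ = ℓ := by linear_combination -h2l
    set g := Equiv.prodCongr (Equiv.refl (ZMod m)) (Equiv.neg (ZMod n)) with hgdef
    have hga : ∀ p : ZMod m × ZMod n, g p = (p.1, -p.2) := fun p => rfl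
    have ginv : ∀ p : ZMod m × ZMod n, g (g p) = p := by
      intro p
      rw [hga, hga]
      show (p.1, -(-p.2)) = p
      rw [neg_neg]
    have hcyc : ∀ u v, XaCycleRel m n k (fun i => -(k i)) u v →
        XaCycleRel m n k (fun i => -(k i)) (g u) (g v) := by
      rintro u v ⟨hp, h1, h2⟩
      refine ⟨?_, h1, ?_⟩
      · show (-u.2).val % 2 = u.1.val % 2
        rw [aux_val_neg hn2]; exact hp
      · show -v.2 = -u.2 + k u.1 ∨ -v.2 = -u.2 + -(k u.1)
        rcases h2 with h2 | h2
        · right; linear_combination -h2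
        · left; linear_combination -h2
    have hlink : ∀ u v, XaLinkRel m n ℓ u v → XaLinkRel m n ℓ (g u) (g v) := by
      rintro u v (⟨hp, hi, h3, h4⟩ | ⟨hp, hi, h3, h4⟩)
      · left
        refine ⟨?_, hi, h3, ?_⟩
        · show (-u.2).val % 2 = u.1.val % 2
          rw [aux_val_neg hn2]; exact hp
        · show -v.2 = -u.2
          rw [h4]
      · right
        refine ⟨?_, hi, h3, ?_⟩
        · show (-u.2).val % 2 = (m - 1) % 2
          rw [aux_val_neg hn2]; exact hp
        · show -v.2 = -u.2 + ℓ
          rw [h4]; linear_combination hneg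
    have grel : ∀ u v, (XaCycleRel m n k (fun i => -(k i)) u v ∨ XaLinkRel m n ℓ u v) →
        (XaCycleRel m n k (fun i => -(k i)) (g u) (g v) ∨ XaLinkRel m n ℓ (g u) (g v)) :=
      fun u v h => h.imp (hcyc u v) (hlink u v)
    have gadj : ∀ u v, (XaGraph m n k (fun i => -(k i)) ℓ).Adj u v →
        (XaGraph m n k (fun i => -(k i)) ℓ).Adj (g u) (g v) := by
      intro u v h
      rw [XaGraph, SimpleGraph.fromRel_adj] at h ⊢
      exact ⟨fun hh => h.1 (g.injective hh), h.2.imp (grel u v) (grel v u)⟩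
    refine ⟨g, ?_, ?_, ?_, ?_⟩
    · intro u v
      constructor
      · intro h
        have := gadj _ _ h
        rwa [ginv, ginv] at this
      · exact gadj u v
    · intro u v h
      rw [XaFactor, SimpleGraph.fromRel_adj] at h ⊢
      exact ⟨fun hh => h.1 (g.injective hh), h.2.imp (hcyc u v) (hcyc v u)⟩
    · intro h
      have h01 : g ((0 : ZMod m), (1 : ZMod n)) = ((0 : ZMod m), (1 : ZMod n)) := by
        rw [h]; rfl
      rw [hga] at h01
      have hsnd : -(1 : ZMod n) = 1 := congrArg Prod.snd h01
      have h2 : ((2 : ℕ) : ZMod n) = 0 := by push_cast; linear_combination -hsnd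
      rw [ZMod.natCast_eq_zero_iff] at h2
      have := Nat.le_of_dvd (by norm_num) h2
      omega
    · rw [hga]
      norm_num

end CubicFIG
end
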